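/- arXiv:2410.14908 — 3 statements merged into one kernel-verified Lean document; each statement's English description precedes it below -/
import Mathlib

section
/- Let A, B, C be associative unital algebras over a field k and let R1: B⊗A → A⊗B, R2: C⊗B → B⊗C, R3: C⊗A → A⊗C be twisting maps satisfying the braid (hexagon) equation (id_A⊗R2)∘(R3⊗id_B)∘(id_C⊗R1) = (R1⊗id_C)∘(id_B⊗R3)∘(R2⊗id_A). Define E: B⊗B → A⊗B⊗C by E(b⊗b') = 1_A⊗bb'⊗1_C. Then (A, B, C, R1, R2, R3, E) is two-sided crossed product data (with V = B and 1_V = 1_B), and the multiplication of the resulting two-sided crossed product A ⋊ B ⋉ C is the iterated twisted tensor product multiplication (a⊗b⊗c)(a'⊗b'⊗c') = a(a'_{R3})_{R1} ⊗ b_{R1}b'_{R2} ⊗ (c_{R3})_{R2}c'; in particular this multiplication on A⊗B⊗C is associative with unit 1_A⊗1_B⊗1_C. -/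
open TensorProduct LinearMap

set_option maxHeartbeats 1000000
set_option synthInstance.maxHeartbeats 400000

noncomputable section

namespace TwoSidedCP

variable (k : Type*) [Field k]

/-- The associator as a linear map. -/
abbrev α (X Y Z : Type*) [AddCommGroup X] [Module k X] [AddCommGroup Y] [Module k Y]
    [AddCommGroup Z] [Module k Z] :
    (X ⊗[k] Y) ⊗[k] Z →ₗ[k] X ⊗[k] (Y ⊗[k] Z) :=
  (TensorProduct.assoc k X Y Z).toLinearMap

/-- The inverse associator as a linear map. -/
abbrev α' (X Y Z : Type*) [AddCommGroup X] [Module k X] [AddCommGroup Y] [Module k Y]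
    [AddCommGroup Z] [Module k Z] :
    X ⊗[k] (Y ⊗[k] Z) →ₗ[k] (X ⊗[k] Y) ⊗[k] Z :=
  (TensorProduct.assoc k X Y Z).symm.toLinearMap

/-- Multiplication `A ⊗ (A ⊗ V) → A ⊗ V` of the two `A`-factors. -/
def mulAV (A : Type*) [Ring A] [Algebra k A] (V : Type*) [AddCommGroup V] [Module k V] :
    A ⊗[k] (A ⊗[k] V) →ₗ[k] A ⊗[k] V :=
  rTensor V (mul' k A) ∘ₗ α' k A A V

/-- Multiplication `(X ⊗ C) ⊗ C → X ⊗ C` of the two `C`-factors. -/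
def mulXC (X : Type*) [AddCommGroup X] [Module k X] (C : Type*) [Ring C] [Algebra k C] :
    (X ⊗[k] C) ⊗[k] C →ₗ[k] X ⊗[k] C :=
  lTensor X (mul' k C) ∘ₗ α k X C C

section TwistingMaps
variable (A B : Type*) [Ring A] [Algebra k A] [Ring B] [Algebra k B]

/-- `R : B ⊗ A → A ⊗ B` is a twisting map between the algebras `A` and `B`:
  in Sweedler notation, `R(b ⊗ 1) = 1 ⊗ b`, `R(1 ⊗ a) = a ⊗ 1`,
  `(aa')_R ⊗ b_R = a_R a'_r ⊗ b_{R_r}` and `a_R ⊗ (bb')_R = a_{R_r} ⊗ b_r b'_R`. -/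
structure IsTwistingMap (R : B ⊗[k] A →ₗ[k] A ⊗[k] B) : Prop where
  unit_left : ∀ a : A, R ((1 : B) ⊗ₜ[k] a) = a ⊗ₜ[k] (1 : B)
  unit_right : ∀ b : B, R (b ⊗ₜ[k] (1 : A)) = (1 : A) ⊗ₜ[k] b
  mul_left : R ∘ₗ lTensor B (mul' k A) ∘ₗ α k B A A
      = rTensor B (mul' k A) ∘ₗ α' k A A B ∘ₗ lTensor A R ∘ₗ α k A B A ∘ₗ rTensor A R
  mul_right : R ∘ₗ rTensor A (mul' k B)
      = lTensor A (mul' k B) ∘ₗ α k A B B ∘ₗ rTensor B R ∘ₗ α' k B A B ∘ₗ lTensor B R ∘ₗ α k B B A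

/-- The multiplication `(a ⊗ b)(a' ⊗ b') = a a'_R ⊗ b_R b'` of the twisted tensor
  product `A ⊗_R B`. -/
def twistMul (R : B ⊗[k] A →ₗ[k] A ⊗[k] B) :
    (A ⊗[k] B) ⊗[k] (A ⊗[k] B) →ₗ[k] A ⊗[k] B :=
  TensorProduct.map (mul' k A) (mul' k B) ∘ₗ α' k A A (B ⊗[k] B) ∘ₗ lTensor A (α k A B B)
    ∘ₗ lTensor A (rTensor B R) ∘ₗ lTensor A (α' k B A B) ∘ₗ α k A B (A ⊗[k] B)

end TwistingMaps

section Brzezinski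
variable (A V : Type*) [Ring A] [Algebra k A] [AddCommGroup V] [Module k V]

/-- The Brzeziński crossed product conditions (brz1)-(brz5) for the data `(A, V, R, σ)`. -/
structure IsBrzData (e : V) (R : V ⊗[k] A →ₗ[k] A ⊗[k] V)
    (σ : V ⊗[k] V →ₗ[k] A ⊗[k] V) : Prop where
  brz1a : ∀ a : A, R (e ⊗ₜ[k] a) = a ⊗ₜ[k] e
  brz1b : ∀ v : V, R (v ⊗ₜ[k] (1 : A)) = (1 : A) ⊗ₜ[k] v
  brz2a : ∀ v : V, σ (e ⊗ₜ[k] v) = (1 : A) ⊗ₜ[k] v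
  brz2b : ∀ v : V, σ (v ⊗ₜ[k] e) = (1 : A) ⊗ₜ[k] v
  brz3 : R ∘ₗ lTensor V (mul' k A) ∘ₗ α k V A A
      = rTensor V (mul' k A) ∘ₗ α' k A A V ∘ₗ lTensor A R ∘ₗ α k A V A ∘ₗ rTensor A R
  brz4 : rTensor V (mul' k A) ∘ₗ α' k A A V ∘ₗ lTensor A σ ∘ₗ α k A V V ∘ₗ rTensor V R
        ∘ₗ α' k V A V ∘ₗ lTensor V σ ∘ₗ α k V V V
      = rTensor V (mul' k A) ∘ₗ α' k A A V ∘ₗ lTensor A σ ∘ₗ α k A V V ∘ₗ rTensor V σ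
  brz5 : rTensor V (mul' k A) ∘ₗ α' k A A V ∘ₗ lTensor A σ ∘ₗ α k A V V ∘ₗ rTensor V R
        ∘ₗ α' k V A V ∘ₗ lTensor V R ∘ₗ α k V V A
      = rTensor V (mul' k A) ∘ₗ α' k A A V ∘ₗ lTensor A R ∘ₗ α k A V A ∘ₗ rTensor A σ

/-- The multiplication `μ_{A⊗V} = (μ₂ ⊗ id_V)∘(id_A ⊗ id_A ⊗ σ)∘(id_A ⊗ R ⊗ id_V)`
  of the Brzeziński crossed product `A ⊗_{R,σ} V`. -/
def brzMul (R : V ⊗[k] A →ₗ[k] A ⊗[k] V) (σ : V ⊗[k] V →ₗ[k] A ⊗[k] V) :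
    (A ⊗[k] V) ⊗[k] (A ⊗[k] V) →ₗ[k] A ⊗[k] V :=
  rTensor V (mul' k A) ∘ₗ α' k A A V ∘ₗ rTensor (A ⊗[k] V) (mul' k A)
    ∘ₗ α' k A A (A ⊗[k] V) ∘ₗ lTensor A (lTensor A σ) ∘ₗ lTensor A (α k A V V)
    ∘ₗ lTensor A (rTensor V R) ∘ₗ lTensor A (α' k V A V) ∘ₗ α k A V (A ⊗[k] V)

end Brzezinski

section Mirror
variable (W B : Type*) [AddCommGroup W] [Module k W] [AddCommGroup B] [Module k B]

/-- The mirror crossed product conditions (mir0)-(mir4) for the data `(W, B, P, ν)`,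
  where the multiplication of `B` is given by `mB` with unit `uB`. -/
structure IsMirrorData (mB : B ⊗[k] B →ₗ[k] B) (uB : B) (e : W)
    (P : B ⊗[k] W →ₗ[k] W ⊗[k] B) (ν : W ⊗[k] W →ₗ[k] W ⊗[k] B) : Prop where
  mir0a : ∀ b : B, P (b ⊗ₜ[k] e) = e ⊗ₜ[k] b
  mir0b : ∀ w : W, P (uB ⊗ₜ[k] w) = w ⊗ₜ[k] uB
  mir1a : ∀ w : W, ν (w ⊗ₜ[k] e) = w ⊗ₜ[k] uB
  mir1b : ∀ w : W, ν (e ⊗ₜ[k] w) = w ⊗ₜ[k] uB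
  mir2 : P ∘ₗ rTensor W mB
      = lTensor W mB ∘ₗ α k W B B ∘ₗ rTensor B P ∘ₗ α' k B W B ∘ₗ lTensor B P ∘ₗ α k B B W
  mir3 : lTensor W mB ∘ₗ α k W B B ∘ₗ rTensor B ν ∘ₗ α' k W W B ∘ₗ lTensor W P
        ∘ₗ α k W B W ∘ₗ rTensor W ν
      = lTensor W mB ∘ₗ α k W B B ∘ₗ rTensor B ν ∘ₗ α' k W W B ∘ₗ lTensor W ν ∘ₗ α k W W W
  mir4 : lTensor W mB ∘ₗ α k W B B ∘ₗ rTensor B ν ∘ₗ α' k W W B ∘ₗ lTensor W P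
        ∘ₗ α k W B W ∘ₗ rTensor W P
      = lTensor W mB ∘ₗ α k W B B ∘ₗ rTensor B P ∘ₗ α' k B W B ∘ₗ lTensor B ν ∘ₗ α k B W W

/-- The multiplication `μ_{W⊗B} = (id_W ⊗ μ₂)∘(ν ⊗ id_B ⊗ id_B)∘(id_W ⊗ P ⊗ id_B)`
  of the mirror crossed product `W ⊗̄_{P,ν} B`. -/
def mirMul (mB : B ⊗[k] B →ₗ[k] B) (P : B ⊗[k] W →ₗ[k] W ⊗[k] B)
    (ν : W ⊗[k] W →ₗ[k] W ⊗[k] B) :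
    (W ⊗[k] B) ⊗[k] (W ⊗[k] B) →ₗ[k] W ⊗[k] B :=
  lTensor W mB ∘ₗ lTensor W (lTensor B mB) ∘ₗ α k W B (B ⊗[k] B)
    ∘ₗ rTensor (B ⊗[k] B) ν ∘ₗ α' k W W (B ⊗[k] B) ∘ₗ lTensor W (α k W B B)
    ∘ₗ lTensor W (rTensor B P) ∘ₗ lTensor W (α' k B W B) ∘ₗ α k W B (W ⊗[k] B)

end Mirror

section TwoSided
variable (A V C : Type*) [Ring A] [Algebra k A] [AddCommGroup V] [Module k V]
  [Ring C] [Algebra k C]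

/-- auxiliary map: multiply the leftover `A`-factor and `C`-factor into `A ⊗ V ⊗ C`. -/
def tsTail : (A ⊗[k] ((A ⊗[k] V) ⊗[k] C)) ⊗[k] C →ₗ[k] (A ⊗[k] V) ⊗[k] C :=
  mulXC k (A ⊗[k] V) C ∘ₗ rTensor C (rTensor C (mulAV k A V) ∘ₗ α' k A (A ⊗[k] V) C)

/-- Two-sided crossed product data `(A, V, C, R1, R2, R3, E)`:
  conditions (i)-(v) of Theorem 2.1 of the paper. -/
structure IsTwoSidedData (e : V) (R1 : V ⊗[k] A →ₗ[k] A ⊗[k] V)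
    (R2 : C ⊗[k] V →ₗ[k] V ⊗[k] C) (R3 : C ⊗[k] A →ₗ[k] A ⊗[k] C)
    (E : V ⊗[k] V →ₗ[k] (A ⊗[k] V) ⊗[k] C) : Prop where
  twist : IsTwistingMap k A C R3
  r1a : ∀ a : A, R1 (e ⊗ₜ[k] a) = a ⊗ₜ[k] e
  r1b : ∀ v : V, R1 (v ⊗ₜ[k] (1 : A)) = (1 : A) ⊗ₜ[k] v
  r2a : ∀ c : C, R2 (c ⊗ₜ[k] e) = e ⊗ₜ[k] c
  r2b : ∀ v : V, R2 ((1 : C) ⊗ₜ[k] v) = v ⊗ₜ[k] (1 : C)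
  ea : ∀ v : V, E (e ⊗ₜ[k] v) = ((1 : A) ⊗ₜ[k] v) ⊗ₜ[k] (1 : C)
  eb : ∀ v : V, E (v ⊗ₜ[k] e) = ((1 : A) ⊗ₜ[k] v) ⊗ₜ[k] (1 : C)
  eq1 : R1 ∘ₗ lTensor V (mul' k A) ∘ₗ α k V A A
      = rTensor V (mul' k A) ∘ₗ α' k A A V ∘ₗ lTensor A R1 ∘ₗ α k A V A ∘ₗ rTensor A R1
  eq2 : R2 ∘ₗ rTensor V (mul' k C)
      = lTensor V (mul' k C) ∘ₗ α k V C C ∘ₗ rTensor C R2 ∘ₗ α' k C V C ∘ₗ lTensor C R2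
        ∘ₗ α k C C V
  eq3 : lTensor A R2 ∘ₗ α k A C V ∘ₗ rTensor V R3 ∘ₗ α' k C A V ∘ₗ lTensor C R1
      = α k A V C ∘ₗ rTensor C R1 ∘ₗ α' k V A C ∘ₗ lTensor V R3 ∘ₗ α k V C A
        ∘ₗ rTensor A R2 ∘ₗ α' k C V A
  eq4 : rTensor C (mulAV k A V) ∘ₗ α' k A (A ⊗[k] V) C ∘ₗ lTensor A E ∘ₗ α k A V V
        ∘ₗ rTensor V R1 ∘ₗ α' k V A V ∘ₗ lTensor V R1 ∘ₗ α k V V A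
      = rTensor C (mulAV k A V) ∘ₗ rTensor C (lTensor A R1) ∘ₗ rTensor C (α k A V A)
        ∘ₗ α' k (A ⊗[k] V) A C ∘ₗ lTensor (A ⊗[k] V) R3 ∘ₗ α k (A ⊗[k] V) C A ∘ₗ rTensor A E
  eq5 : mulXC k (A ⊗[k] V) C ∘ₗ rTensor C E ∘ₗ α' k V V C ∘ₗ lTensor V R2
        ∘ₗ α k V C V ∘ₗ rTensor V R2
      = mulXC k (A ⊗[k] V) C ∘ₗ rTensor C (α' k A V C) ∘ₗ rTensor C (lTensor A R2)
        ∘ₗ rTensor C (α k A C V) ∘ₗ rTensor C (rTensor V R3) ∘ₗ rTensor C (α' k C A V)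
        ∘ₗ α' k C (A ⊗[k] V) C ∘ₗ lTensor C E ∘ₗ α k C V V
  eq6 : tsTail k A V C ∘ₗ rTensor C (lTensor A E) ∘ₗ rTensor C (α k A V V)
        ∘ₗ rTensor C (rTensor V R1) ∘ₗ rTensor C (α' k V A V)
        ∘ₗ α' k V (A ⊗[k] V) C ∘ₗ lTensor V E ∘ₗ α k V V V
      = tsTail k A V C ∘ₗ rTensor C (lTensor A E) ∘ₗ rTensor C (α k A V V)
        ∘ₗ α' k (A ⊗[k] V) V C ∘ₗ lTensor (A ⊗[k] V) R2 ∘ₗ α k (A ⊗[k] V) C V ∘ₗ rTensor V E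

/-- The map `P = (id_A ⊗ R2)∘(R3 ⊗ id_V) : C ⊗ (A ⊗ V) → (A ⊗ V) ⊗ C`. -/
def tsP (R2 : C ⊗[k] V →ₗ[k] V ⊗[k] C) (R3 : C ⊗[k] A →ₗ[k] A ⊗[k] C) :
    C ⊗[k] (A ⊗[k] V) →ₗ[k] (A ⊗[k] V) ⊗[k] C :=
  α' k A V C ∘ₗ lTensor A R2 ∘ₗ α k A C V ∘ₗ rTensor V R3 ∘ₗ α' k C A V

/-- The map `ν = (μ_A ⊗ id_V ⊗ id_C)∘(μ_A ⊗ E)∘(id_A ⊗ R1 ⊗ id_V)`,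
  `ν((a ⊗ v) ⊗ (a' ⊗ v')) = (a a'_{R1} E_A(v_{R1}, v') ⊗ E_V(v_{R1}, v')) ⊗ E_C(v_{R1}, v')`. -/
def tsNu (R1 : V ⊗[k] A →ₗ[k] A ⊗[k] V) (E : V ⊗[k] V →ₗ[k] (A ⊗[k] V) ⊗[k] C) :
    (A ⊗[k] V) ⊗[k] (A ⊗[k] V) →ₗ[k] (A ⊗[k] V) ⊗[k] C :=
  rTensor C (mulAV k A V) ∘ₗ α' k A (A ⊗[k] V) C ∘ₗ lTensor A (rTensor C (mulAV k A V))
    ∘ₗ lTensor A (α' k A (A ⊗[k] V) C) ∘ₗ lTensor A (lTensor A E) ∘ₗ lTensor A (α k A V V)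
    ∘ₗ lTensor A (rTensor V R1) ∘ₗ lTensor A (α' k V A V) ∘ₗ α k A V (A ⊗[k] V)

/-- The map `R = (R1 ⊗ id_C)∘(id_V ⊗ R3) : (V ⊗ C) ⊗ A → A ⊗ (V ⊗ C)`. -/
def tsR (R1 : V ⊗[k] A →ₗ[k] A ⊗[k] V) (R3 : C ⊗[k] A →ₗ[k] A ⊗[k] C) :
    (V ⊗[k] C) ⊗[k] A →ₗ[k] A ⊗[k] (V ⊗[k] C) :=
  α k A V C ∘ₗ rTensor C R1 ∘ₗ α' k V A C ∘ₗ lTensor V R3 ∘ₗ α k V C A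

/-- The map `σ = (id_A ⊗ id_V ⊗ μ_C)∘(E ⊗ μ_C)∘(id_V ⊗ R2 ⊗ id_C)`,
  `σ((v ⊗ c) ⊗ (v' ⊗ c')) = E_A(v, v'_{R2}) ⊗ (E_V(v, v'_{R2}) ⊗ E_C(v, v'_{R2}) c_{R2} c')`. -/
def tsSigma (R2 : C ⊗[k] V →ₗ[k] V ⊗[k] C) (E : V ⊗[k] V →ₗ[k] (A ⊗[k] V) ⊗[k] C) :
    (V ⊗[k] C) ⊗[k] (V ⊗[k] C) →ₗ[k] A ⊗[k] (V ⊗[k] C) :=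
  α k A V C ∘ₗ mulXC k (A ⊗[k] V) C ∘ₗ rTensor C E ∘ₗ α' k V V C
    ∘ₗ lTensor V (lTensor V (mul' k C)) ∘ₗ lTensor V (α k V C C)
    ∘ₗ lTensor V (rTensor C R2) ∘ₗ lTensor V (α' k C V C) ∘ₗ α k V C (V ⊗[k] C)

/-- The multiplication of the two-sided crossed product `A ⋊ V ⋉ C`:
  `(a ⊗ v ⊗ c)(a' ⊗ v' ⊗ c') = a (a'_{R3})_{R1} E_A(v_{R1}, v'_{R2}) ⊗ E_V(v_{R1}, v'_{R2})
    ⊗ E_C(v_{R1}, v'_{R2}) (c_{R3})_{R2} c'`. -/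
def tsMul (R1 : V ⊗[k] A →ₗ[k] A ⊗[k] V) (R2 : C ⊗[k] V →ₗ[k] V ⊗[k] C)
    (R3 : C ⊗[k] A →ₗ[k] A ⊗[k] C) (E : V ⊗[k] V →ₗ[k] (A ⊗[k] V) ⊗[k] C) :
    ((A ⊗[k] V) ⊗[k] C) ⊗[k] ((A ⊗[k] V) ⊗[k] C) →ₗ[k] (A ⊗[k] V) ⊗[k] C :=
  lTensor (A ⊗[k] V) (mul' k C) ∘ₗ α k (A ⊗[k] V) C C
    ∘ₗ rTensor C (tsNu k A V C R1 E) ∘ₗ α' k (A ⊗[k] V) (A ⊗[k] V) C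
    ∘ₗ lTensor (A ⊗[k] V) (lTensor (A ⊗[k] V) (mul' k C))
    ∘ₗ lTensor (A ⊗[k] V) (α k (A ⊗[k] V) C C)
    ∘ₗ lTensor (A ⊗[k] V) (rTensor C (tsP k A V C R2 R3))
    ∘ₗ lTensor (A ⊗[k] V) (α' k C (A ⊗[k] V) C)
    ∘ₗ α k (A ⊗[k] V) C ((A ⊗[k] V) ⊗[k] C)

/-- The canonical linear isomorphism `A ⊗ V ⊗ C ≅ V ⊗ (A ⊗ C)`. -/
def phiVAC : ((A ⊗[k] V) ⊗[k] C) ≃ₗ[k] V ⊗[k] (A ⊗[k] C) :=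
  (TensorProduct.congr (TensorProduct.comm k A V) (LinearEquiv.refl k C)).trans
    (TensorProduct.assoc k V A C)

end TwoSided

section Iterated
variable (A B C : Type*) [Ring A] [Algebra k A] [Ring B] [Algebra k B] [Ring C] [Algebra k C]

/-- The multiplication of the iterated twisted tensor product:
  `(a ⊗ b ⊗ c)(a' ⊗ b' ⊗ c') = a (a'_{R3})_{R1} ⊗ b_{R1} b'_{R2} ⊗ (c_{R3})_{R2} c'`. -/
def iterMul (R1 : B ⊗[k] A →ₗ[k] A ⊗[k] B) (R2 : C ⊗[k] B →ₗ[k] B ⊗[k] C)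
    (R3 : C ⊗[k] A →ₗ[k] A ⊗[k] C) :
    ((A ⊗[k] B) ⊗[k] C) ⊗[k] ((A ⊗[k] B) ⊗[k] C) →ₗ[k] (A ⊗[k] B) ⊗[k] C :=
  rTensor C (twistMul k A B R1) ∘ₗ α' k (A ⊗[k] B) (A ⊗[k] B) C
    ∘ₗ lTensor (A ⊗[k] B) (lTensor (A ⊗[k] B) (mul' k C))
    ∘ₗ lTensor (A ⊗[k] B) (α k (A ⊗[k] B) C C)
    ∘ₗ lTensor (A ⊗[k] B) (rTensor C (tsP k A B C R2 R3))
    ∘ₗ lTensor (A ⊗[k] B) (α' k C (A ⊗[k] B) C)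
    ∘ₗ α k (A ⊗[k] B) C ((A ⊗[k] B) ⊗[k] C)

end Iterated

section Gen
variable {X Y : Type*} [AddCommGroup X] [Module k X] [AddCommGroup Y] [Module k Y]
def gMul (mX : X ⊗[k] X →ₗ[k] X) (mY : Y ⊗[k] Y →ₗ[k] Y) (S : Y ⊗[k] X →ₗ[k] X ⊗[k] Y) :
    (X ⊗[k] Y) ⊗[k] (X ⊗[k] Y) →ₗ[k] X ⊗[k] Y :=
  TensorProduct.map mX mY ∘ₗ α' k X X (Y ⊗[k] Y) ∘ₗ lTensor X (α k X Y Y)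
    ∘ₗ lTensor X (rTensor Y S) ∘ₗ lTensor X (α' k Y X Y) ∘ₗ α k X Y (X ⊗[k] Y)
structure IsMon (m : X ⊗[k] X →ₗ[k] X) (u : X) : Prop where
  one_mul : ∀ x, m (u ⊗ₜ[k] x) = x
  mul_one : ∀ x, m (x ⊗ₜ[k] u) = x
  assoc : ∀ x y z, m (m (x ⊗ₜ[k] y) ⊗ₜ[k] z) = m (x ⊗ₜ[k] m (y ⊗ₜ[k] z))
structure IsGT (mX : X ⊗[k] X →ₗ[k] X) (uX : X) (mY : Y ⊗[k] Y →ₗ[k] Y) (uY : Y)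
    (S : Y ⊗[k] X →ₗ[k] X ⊗[k] Y) : Prop where
  unit_left : ∀ x, S (uY ⊗ₜ[k] x) = x ⊗ₜ[k] uY
  unit_right : ∀ y, S (y ⊗ₜ[k] uX) = uX ⊗ₜ[k] y
  mul_left : S ∘ₗ lTensor Y mX ∘ₗ α k Y X X
      = rTensor Y mX ∘ₗ α' k X X Y ∘ₗ lTensor X S ∘ₗ α k X Y X ∘ₗ rTensor X S
  mul_right : S ∘ₗ rTensor X mY
      = lTensor X mY ∘ₗ α k X Y Y ∘ₗ rTensor Y S ∘ₗ α' k Y X Y ∘ₗ lTensor Y S ∘ₗ α k Y Y X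
variable {mX : X ⊗[k] X →ₗ[k] X} {uX : X} {mY : Y ⊗[k] Y →ₗ[k] Y} {uY : Y}
  {S : Y ⊗[k] X →ₗ[k] X ⊗[k] Y}
def gG (mX : X ⊗[k] X →ₗ[k] X) (S : Y ⊗[k] X →ₗ[k] X ⊗[k] Y) :
    (X ⊗[k] Y) ⊗[k] X →ₗ[k] X ⊗[k] Y :=
  rTensor Y mX ∘ₗ α' k X X Y ∘ₗ lTensor X S ∘ₗ α k X Y X
def gH (mY : Y ⊗[k] Y →ₗ[k] Y) (S : Y ⊗[k] X →ₗ[k] X ⊗[k] Y) :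
    Y ⊗[k] (X ⊗[k] Y) →ₗ[k] X ⊗[k] Y :=
  lTensor X mY ∘ₗ α k X Y Y ∘ₗ rTensor Y S ∘ₗ α' k Y X Y
lemma IsGT.tmulL (h : IsGT k mX uX mY uY S) (y : Y) (x x' : X) :
    S (y ⊗ₜ[k] mX (x ⊗ₜ[k] x')) = gG k mX S (S (y ⊗ₜ[k] x) ⊗ₜ[k] x') := by
  have := congrArg (fun f => f ((y ⊗ₜ[k] x) ⊗ₜ[k] x')) h.mul_left
  simpa [gG] using this
lemma IsGT.tmulR (h : IsGT k mX uX mY uY S) (y y' : Y) (x : X) :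
    S (mY (y ⊗ₜ[k] y') ⊗ₜ[k] x) = gH k mY S (y ⊗ₜ[k] S (y' ⊗ₜ[k] x)) := by
  have := congrArg (fun f => f ((y ⊗ₜ[k] y') ⊗ₜ[k] x)) h.mul_right
  simpa [gH] using this
def gSand (mX : X ⊗[k] X →ₗ[k] X) (mY : Y ⊗[k] Y →ₗ[k] Y) :
    X ⊗[k] ((X ⊗[k] Y) ⊗[k] Y) →ₗ[k] X ⊗[k] Y :=
  TensorProduct.map mX mY ∘ₗ α' k X X (Y ⊗[k] Y) ∘ₗ lTensor X (α k X Y Y)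
lemma gMul_tmul (x x' : X) (y y' : Y) :
    gMul k mX mY S ((x ⊗ₜ[k] y) ⊗ₜ[k] (x' ⊗ₜ[k] y'))
      = gSand k mX mY (x ⊗ₜ[k] (S (y ⊗ₜ[k] x') ⊗ₜ[k] y')) := by
  simp [gMul, gSand]
lemma gSand_tmul (x u : X) (v y : Y) :
    gSand k mX mY (x ⊗ₜ[k] ((u ⊗ₜ[k] v) ⊗ₜ[k] y)) = mX (x ⊗ₜ[k] u) ⊗ₜ[k] mY (v ⊗ₜ[k] y) := by
  simp [gSand]

/-- the intermediate map for the left-hand side of associativity -/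
def gPsi (mX : X ⊗[k] X →ₗ[k] X) (mY : Y ⊗[k] Y →ₗ[k] Y) (S : Y ⊗[k] X →ₗ[k] X ⊗[k] Y) :
    X ⊗[k] (((X ⊗[k] Y) ⊗[k] (X ⊗[k] Y)) ⊗[k] Y) →ₗ[k] X ⊗[k] Y :=
  gSand k mX mY ∘ₗ rTensor ((X ⊗[k] Y) ⊗[k] Y) mX ∘ₗ α' k X X ((X ⊗[k] Y) ⊗[k] Y)
    ∘ₗ lTensor X (α k X (X ⊗[k] Y) Y)
    ∘ₗ lTensor X (rTensor Y (lTensor X (gH k mY S) ∘ₗ α k X Y (X ⊗[k] Y)))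
/-- the intermediate map for the right-hand side of associativity -/
def gPsi' (mX : X ⊗[k] X →ₗ[k] X) (mY : Y ⊗[k] Y →ₗ[k] Y) (S : Y ⊗[k] X →ₗ[k] X ⊗[k] Y) :
    X ⊗[k] (((X ⊗[k] Y) ⊗[k] (X ⊗[k] Y)) ⊗[k] Y) →ₗ[k] X ⊗[k] Y :=
  gSand k mX mY ∘ₗ lTensor X (TensorProduct.map (gG k mX S) mY
    ∘ₗ α' k (X ⊗[k] Y) X (Y ⊗[k] Y) ∘ₗ lTensor (X ⊗[k] Y) (α k X Y Y)
    ∘ₗ α k (X ⊗[k] Y) (X ⊗[k] Y) Y)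

lemma gPsi_tmul (x u : X) (v : Y) (t : (X ⊗[k] Y)) (y'' : Y) :
    gPsi k mX mY S (x ⊗ₜ[k] (((u ⊗ₜ[k] v) ⊗ₜ[k] t) ⊗ₜ[k] y''))
      = gSand k mX mY (mX (x ⊗ₜ[k] u) ⊗ₜ[k] (gH k mY S (v ⊗ₜ[k] t) ⊗ₜ[k] y'')) := by
  simp [gPsi]
lemma gPsi'_tmul (x : X) (w : X ⊗[k] Y) (p : X) (q y'' : Y) :
    gPsi' k mX mY S (x ⊗ₜ[k] ((w ⊗ₜ[k] (p ⊗ₜ[k] q)) ⊗ₜ[k] y''))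
      = gSand k mX mY (x ⊗ₜ[k] (gG k mX S (w ⊗ₜ[k] p) ⊗ₜ[k] mY (q ⊗ₜ[k] y''))) := by
  simp [gPsi']
lemma gH_tmul (v : Y) (p : X) (q : Y) :
    gH k mY S (v ⊗ₜ[k] (p ⊗ₜ[k] q))
      = (lTensor X mY ∘ₗ α k X Y Y) (S (v ⊗ₜ[k] p) ⊗ₜ[k] q) := by
  simp [gH]
lemma gG_tmul (u : X) (v : Y) (p : X) :
    gG k mX S ((u ⊗ₜ[k] v) ⊗ₜ[k] p)
      = (rTensor Y mX ∘ₗ α' k X X Y) (u ⊗ₜ[k] S (v ⊗ₜ[k] p)) := by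
  simp [gG]

lemma gL1 (h : IsGT k mX uX mY uY S) (x x'' : X) (y' y'' : Y) (w : X ⊗[k] Y) :
    gMul k mX mY S (gSand k mX mY (x ⊗ₜ[k] (w ⊗ₜ[k] y')) ⊗ₜ[k] (x'' ⊗ₜ[k] y''))
      = gPsi k mX mY S (x ⊗ₜ[k] ((w ⊗ₜ[k] S (y' ⊗ₜ[k] x'')) ⊗ₜ[k] y'')) := by
  induction w using TensorProduct.induction_on with
  | zero => simp [gSand, gPsi]
  | tmul u v =>
      rw [gSand_tmul, gMul_tmul, h.tmulR, gPsi_tmul]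
  | add w₁ w₂ ih₁ ih₂ =>
      simp only [tmul_add, add_tmul, map_add] at *
      rw [ih₁, ih₂]

lemma gL2 (h : IsGT k mX uX mY uY S) (x x' : X) (y y'' : Y) (t : X ⊗[k] Y) :
    gMul k mX mY S ((x ⊗ₜ[k] y) ⊗ₜ[k] gSand k mX mY (x' ⊗ₜ[k] (t ⊗ₜ[k] y'')))
      = gPsi' k mX mY S (x ⊗ₜ[k] ((S (y ⊗ₜ[k] x') ⊗ₜ[k] t) ⊗ₜ[k] y'')) := by
  induction t using TensorProduct.induction_on with
  | zero => simp [gSand, gPsi']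
  | tmul p q =>
      rw [gSand_tmul, gMul_tmul, h.tmulL, gPsi'_tmul]
  | add t₁ t₂ ih₁ ih₂ =>
      simp only [tmul_add, add_tmul, map_add] at *
      rw [ih₁, ih₂]

lemma gL3 (hX : IsMon k mX uX) (hY : IsMon k mY uY) (x : X) (y'' : Y)
    (w t : X ⊗[k] Y) :
    gPsi k mX mY S (x ⊗ₜ[k] ((w ⊗ₜ[k] t) ⊗ₜ[k] y''))
      = gPsi' k mX mY S (x ⊗ₜ[k] ((w ⊗ₜ[k] t) ⊗ₜ[k] y'')) := by
  induction w using TensorProduct.induction_on with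
  | zero => simp
  | tmul u v =>
      induction t using TensorProduct.induction_on with
      | zero => simp
      | tmul p q =>
          rw [gPsi_tmul, gPsi'_tmul, gH_tmul, gG_tmul]
          generalize S (v ⊗ₜ[k] p) = z
          induction z using TensorProduct.induction_on with
          | zero => simp [gSand]
          | tmul s t' =>
              simp only [coe_comp, Function.comp_apply, LinearEquiv.coe_coe,
                assoc_tmul, assoc_symm_tmul, lTensor_tmul, rTensor_tmul]
              rw [gSand_tmul, gSand_tmul, hX.assoc, hY.assoc]
          | add z₁ z₂ ih₁ ih₂ =>
              simp only [tmul_add, add_tmul, map_add] at *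
              rw [ih₁, ih₂]
      | add t₁ t₂ ih₁ ih₂ =>
          simp only [tmul_add, add_tmul, map_add] at *
          rw [ih₁, ih₂]
  | add w₁ w₂ ih₁ ih₂ =>
      simp only [tmul_add, add_tmul, map_add] at *
      rw [ih₁, ih₂]

theorem gMul_isMon (hX : IsMon k mX uX) (hY : IsMon k mY uY) (hS : IsGT k mX uX mY uY S) :
    IsMon k (gMul k mX mY S) (uX ⊗ₜ[k] uY) := by
  constructor
  · intro z
    induction z using TensorProduct.induction_on with
    | zero => simp
    | tmul x y => rw [gMul_tmul, hS.unit_left, gSand_tmul, hX.one_mul, hY.one_mul]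
    | add z₁ z₂ ih₁ ih₂ => simp only [tmul_add, map_add, ih₁, ih₂]
  · intro z
    induction z using TensorProduct.induction_on with
    | zero => simp
    | tmul x y => rw [gMul_tmul, hS.unit_right, gSand_tmul, hX.mul_one, hY.mul_one]
    | add z₁ z₂ ih₁ ih₂ => simp only [add_tmul, map_add, ih₁, ih₂]
  · intro x y z
    induction x using TensorProduct.induction_on with
    | zero => simp
    | tmul x₁ y₁ =>
        induction y using TensorProduct.induction_on with
        | zero => simp
        | tmul x₂ y₂ =>
            induction z using TensorProduct.induction_on with
            | zero => simp
            | tmul x₃ y₃ =>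
                rw [gMul_tmul k x₁ x₂, gMul_tmul k x₂ x₃, gL1 k hS, gL2 k hS, gL3 k hX hY]
            | add z₁ z₂ ih₁ ih₂ => simp only [tmul_add, map_add, ih₁, ih₂]
        | add z₁ z₂ ih₁ ih₂ =>
            simp only [tmul_add, add_tmul, map_add] at *
            rw [ih₁, ih₂]
    | add z₁ z₂ ih₁ ih₂ =>
        simp only [tmul_add, add_tmul, map_add] at *
        rw [ih₁, ih₂]
end Gen

section TsPAux
variable {A B C : Type*} [Ring A] [Algebra k A] [Ring B] [Algebra k B] [Ring C] [Algebra k C]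
variable (R1 : B ⊗[k] A →ₗ[k] A ⊗[k] B) (R2 : C ⊗[k] B →ₗ[k] B ⊗[k] C)
  (R3 : C ⊗[k] A →ₗ[k] A ⊗[k] C)

lemma twistMul_eq (R : B ⊗[k] A →ₗ[k] A ⊗[k] B) :
    twistMul k A B R = gMul k (mul' k A) (mul' k B) R := rfl

lemma IsTwistingMap.toGT {R : B ⊗[k] A →ₗ[k] A ⊗[k] B} (h : IsTwistingMap k A B R) :
    IsGT k (mul' k A) (1 : A) (mul' k B) (1 : B) R :=
  ⟨h.unit_left, h.unit_right, h.mul_left, h.mul_right⟩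

lemma mul'_isMon : IsMon k (mul' k A) (1 : A) :=
  ⟨fun x => by simp, fun x => by simp, fun x y z => by simp [mul_assoc]⟩

lemma twl {R : B ⊗[k] A →ₗ[k] A ⊗[k] B} (h : IsTwistingMap k A B R) (b : B) (a a' : A) :
    R (b ⊗ₜ[k] (a * a')) = gG k (mul' k A) R (R (b ⊗ₜ[k] a) ⊗ₜ[k] a') := by
  simpa [gG] using IsGT.tmulL k (IsTwistingMap.toGT k h) b a a'

lemma twr {R : B ⊗[k] A →ₗ[k] A ⊗[k] B} (h : IsTwistingMap k A B R) (b b' : B) (a : A) :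
    R ((b * b') ⊗ₜ[k] a) = gH k (mul' k B) R (b ⊗ₜ[k] R (b' ⊗ₜ[k] a)) := by
  simpa [gH] using IsGT.tmulR k (IsTwistingMap.toGT k h) b b' a

/-- auxiliary part of `tsP` -/
def tsPhi : (A ⊗[k] C) ⊗[k] B →ₗ[k] (A ⊗[k] B) ⊗[k] C :=
  α' k A B C ∘ₗ lTensor A R2 ∘ₗ α k A C B

lemma tsP_tmul (c : C) (a : A) (b : B) :
    tsP k A B C R2 R3 (c ⊗ₜ[k] (a ⊗ₜ[k] b)) = tsPhi k R2 (R3 (c ⊗ₜ[k] a) ⊗ₜ[k] b) := by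
  simp [tsP, tsPhi]

lemma tsPhi_tmul (a : A) (γ : C) (b : B) :
    tsPhi k R2 ((a ⊗ₜ[k] γ) ⊗ₜ[k] b) = α' k A B C (a ⊗ₜ[k] R2 (γ ⊗ₜ[k] b)) := by
  simp [tsPhi]

/-- the map `Θ` -/
def tsTheta : (A ⊗[k] C) ⊗[k] (B ⊗[k] C) →ₗ[k] (A ⊗[k] B) ⊗[k] C :=
  α' k A B C ∘ₗ lTensor A (gH k (mul' k C) R2) ∘ₗ α k A C (B ⊗[k] C)

lemma tsTheta_tmul (a : A) (γ : C) (v : B ⊗[k] C) :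
    tsTheta k R2 ((a ⊗ₜ[k] γ) ⊗ₜ[k] v)
      = α' k A B C (a ⊗ₜ[k] gH k (mul' k C) R2 (γ ⊗ₜ[k] v)) := by
  simp [tsTheta]

lemma tsClaim1 (h2 : IsTwistingMap k B C R2) (z : A ⊗[k] C) (γ : C) (b : B) :
    tsPhi k R2 ((lTensor A (mul' k C) ∘ₗ α k A C C) (z ⊗ₜ[k] γ) ⊗ₜ[k] b)
      = tsTheta k R2 (z ⊗ₜ[k] R2 (γ ⊗ₜ[k] b)) := by
  induction z using TensorProduct.induction_on with
  | zero => simp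
  | tmul a'' γ'' =>
      simp only [coe_comp, Function.comp_apply, LinearEquiv.coe_coe, assoc_tmul,
        lTensor_tmul, mul'_apply]
      rw [tsPhi_tmul, twr k h2, tsTheta_tmul]
  | add z₁ z₂ ih₁ ih₂ =>
      simp only [tmul_add, add_tmul, map_add] at *
      rw [ih₁, ih₂]

lemma tsClaim2 (c : C) (a' : A) (v : B ⊗[k] C) :
    (lTensor (A ⊗[k] B) (mul' k C)) ((TensorProduct.assoc k (A ⊗[k] B) C C)
        ((rTensor C (tsP k A B C R2 R3)) ((TensorProduct.assoc k C (A ⊗[k] B) C).symm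
          (c ⊗ₜ[k] (α' k A B C) (a' ⊗ₜ[k] v)))))
      = tsTheta k R2 (R3 (c ⊗ₜ[k] a') ⊗ₜ[k] v) := by
  induction v using TensorProduct.induction_on with
  | zero => simp
  | tmul b' γ' =>
      simp only [coe_comp, Function.comp_apply, LinearEquiv.coe_coe, assoc_symm_tmul,
        rTensor_tmul]
      rw [tsP_tmul]
      generalize R3 (c ⊗ₜ[k] a') = z
      induction z using TensorProduct.induction_on with
      | zero => simp
      | tmul a'' γ'' =>
          rw [tsPhi_tmul, tsTheta_tmul, gH_tmul]
          generalize R2 (γ'' ⊗ₜ[k] b') = v'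
          induction v' using TensorProduct.induction_on with
          | zero => simp
          | tmul b'' c₂ => simp [mul'_apply]
          | add v₁ v₂ ih₁ ih₂ =>
              simp only [tmul_add, add_tmul, map_add] at *
              rw [ih₁, ih₂]
      | add z₁ z₂ ih₁ ih₂ =>
          simp only [tmul_add, add_tmul, map_add] at *
          rw [ih₁, ih₂]
  | add v₁ v₂ ih₁ ih₂ =>
      simp only [tmul_add, add_tmul, map_add] at *
      rw [ih₁, ih₂]

lemma tsP_mul_right (h2 : IsTwistingMap k B C R2) (h3 : IsTwistingMap k A C R3) :
    tsP k A B C R2 R3 ∘ₗ rTensor (A ⊗[k] B) (mul' k C)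
      = lTensor (A ⊗[k] B) (mul' k C) ∘ₗ α k (A ⊗[k] B) C C
        ∘ₗ rTensor C (tsP k A B C R2 R3) ∘ₗ α' k C (A ⊗[k] B) C
        ∘ₗ lTensor C (tsP k A B C R2 R3) ∘ₗ α k C C (A ⊗[k] B) := by
  apply TensorProduct.ext'
  intro t x
  induction t using TensorProduct.induction_on with
  | zero => simp [zero_tmul]
  | tmul c c' =>
      induction x using TensorProduct.induction_on with
      | zero => simp
      | tmul a b =>
          simp only [coe_comp, Function.comp_apply, LinearEquiv.coe_coe, assoc_tmul,
            rTensor_tmul, lTensor_tmul, mul'_apply]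
          rw [tsP_tmul, tsP_tmul, twr k h3]
          generalize R3 (c' ⊗ₜ[k] a) = w
          induction w using TensorProduct.induction_on with
          | zero => simp
          | tmul a' γ =>
              rw [gH_tmul, tsClaim1 k R2 h2, tsPhi_tmul, tsClaim2 k R2 R3]
              
          | add w₁ w₂ ih₁ ih₂ =>
              simp only [tmul_add, add_tmul, map_add] at *
              rw [ih₁, ih₂]
      | add x₁ x₂ ih₁ ih₂ =>
          simp only [tmul_add, add_tmul, map_add] at *
          rw [ih₁, ih₂]
  | add t₁ t₂ ih₁ ih₂ =>
      simp only [tmul_add, add_tmul, map_add] at *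
      rw [ih₁, ih₂]

/-! ### the braided part: `tsP` is twisting w.r.t. the twisted multiplication -/

lemma twistMul_tmul (R : B ⊗[k] A →ₗ[k] A ⊗[k] B) (x x' : A) (y y' : B) :
    twistMul k A B R ((x ⊗ₜ[k] y) ⊗ₜ[k] (x' ⊗ₜ[k] y'))
      = gSand k (mul' k A) (mul' k B) (x ⊗ₜ[k] (R (y ⊗ₜ[k] x') ⊗ₜ[k] y')) := by
  simp [twistMul, gSand]

def tlMap : C ⊗[k] (A ⊗[k] B) →ₗ[k] A ⊗[k] (B ⊗[k] C) :=
  lTensor A R2 ∘ₗ α k A C B ∘ₗ rTensor B R3 ∘ₗ α' k C A B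

def trMap : C ⊗[k] (B ⊗[k] A) →ₗ[k] A ⊗[k] (B ⊗[k] C) :=
  α k A B C ∘ₗ rTensor C R1 ∘ₗ α' k B A C ∘ₗ lTensor B R3 ∘ₗ α k B C A
    ∘ₗ rTensor A R2 ∘ₗ α' k C B A

def trTail : (B ⊗[k] C) ⊗[k] A →ₗ[k] A ⊗[k] (B ⊗[k] C) :=
  α k A B C ∘ₗ rTensor C R1 ∘ₗ α' k B A C ∘ₗ lTensor B R3 ∘ₗ α k B C A

def trTail2 : B ⊗[k] (A ⊗[k] C) →ₗ[k] A ⊗[k] (B ⊗[k] C) :=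
  α k A B C ∘ₗ rTensor C R1 ∘ₗ α' k B A C

lemma tlMap_tmul (γ : C) (u : A) (v : B) :
    tlMap k R2 R3 (γ ⊗ₜ[k] (u ⊗ₜ[k] v))
      = (lTensor A R2 ∘ₗ α k A C B) (R3 (γ ⊗ₜ[k] u) ⊗ₜ[k] v) := by
  simp [tlMap]

lemma trMap_tmul (γ : C) (b : B) (a' : A) :
    trMap k R1 R2 R3 (γ ⊗ₜ[k] (b ⊗ₜ[k] a'))
      = trTail k R1 R3 (R2 (γ ⊗ₜ[k] b) ⊗ₜ[k] a') := by
  simp [trMap, trTail]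

lemma trTail_tmul (b9 : B) (g7 : C) (a' : A) :
    trTail k R1 R3 ((b9 ⊗ₜ[k] g7) ⊗ₜ[k] a')
      = trTail2 k R1 (b9 ⊗ₜ[k] R3 (g7 ⊗ₜ[k] a')) := by
  simp [trTail, trTail2]

lemma trTail2_tmul (b9 : B) (a8 : A) (g8 : C) :
    trTail2 k R1 (b9 ⊗ₜ[k] (a8 ⊗ₜ[k] g8))
      = (TensorProduct.assoc k A B C) (R1 (b9 ⊗ₜ[k] a8) ⊗ₜ[k] g8) := by
  simp [trTail2]

lemma braid_tmul
    (hb : lTensor A R2 ∘ₗ α k A C B ∘ₗ rTensor B R3 ∘ₗ α' k C A B ∘ₗ lTensor C R1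
      = α k A B C ∘ₗ rTensor C R1 ∘ₗ α' k B A C ∘ₗ lTensor B R3 ∘ₗ α k B C A
        ∘ₗ rTensor A R2 ∘ₗ α' k C B A)
    (c : C) (b : B) (a' : A) :
    tlMap k R2 R3 (c ⊗ₜ[k] R1 (b ⊗ₜ[k] a')) = trMap k R1 R2 R3 (c ⊗ₜ[k] (b ⊗ₜ[k] a')) := by
  have := congrArg (fun f => f (c ⊗ₜ[k] (b ⊗ₜ[k] a'))) hb
  simpa [tlMap, trMap] using this

def xiTail : (A ⊗[k] (A ⊗[k] (B ⊗[k] C))) ⊗[k] B →ₗ[k] (A ⊗[k] B) ⊗[k] C :=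
  α' k A B C ∘ₗ lTensor A (gG k (mul' k B) R2) ∘ₗ α k A (B ⊗[k] C) B
    ∘ₗ rTensor B (rTensor (B ⊗[k] C) (mul' k A)) ∘ₗ rTensor B (α' k A A (B ⊗[k] C))

def xiL : ((A ⊗[k] C) ⊗[k] (A ⊗[k] B)) ⊗[k] B →ₗ[k] (A ⊗[k] B) ⊗[k] C :=
  xiTail k R2 ∘ₗ rTensor B (lTensor A (tlMap k R2 R3))
    ∘ₗ rTensor B (α k A C (A ⊗[k] B))

def xiR : ((A ⊗[k] C) ⊗[k] (B ⊗[k] A)) ⊗[k] B →ₗ[k] (A ⊗[k] B) ⊗[k] C :=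
  xiTail k R2 ∘ₗ rTensor B (lTensor A (trMap k R1 R2 R3))
    ∘ₗ rTensor B (α k A C (B ⊗[k] A))

lemma xiL_tmul (a9 : A) (γ : C) (w : A ⊗[k] B) (b'' : B) :
    xiL k R2 R3 (((a9 ⊗ₜ[k] γ) ⊗ₜ[k] w) ⊗ₜ[k] b'')
      = xiTail k R2 ((a9 ⊗ₜ[k] tlMap k R2 R3 (γ ⊗ₜ[k] w)) ⊗ₜ[k] b'') := by
  simp [xiL]

lemma xiR_tmul (a9 : A) (γ : C) (w : B ⊗[k] A) (b'' : B) :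
    xiR k R1 R2 R3 (((a9 ⊗ₜ[k] γ) ⊗ₜ[k] w) ⊗ₜ[k] b'')
      = xiTail k R2 ((a9 ⊗ₜ[k] trMap k R1 R2 R3 (γ ⊗ₜ[k] w)) ⊗ₜ[k] b'') := by
  simp [xiR]

def omg : A ⊗[k] ((A ⊗[k] B) ⊗[k] (B ⊗[k] C)) →ₗ[k] (A ⊗[k] B) ⊗[k] C :=
  rTensor C (gSand k (mul' k A) (mul' k B)) ∘ₗ α' k A ((A ⊗[k] B) ⊗[k] B) C
    ∘ₗ lTensor A (α' k (A ⊗[k] B) B C)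

lemma mlL (h2 : IsTwistingMap k B C R2) (h3 : IsTwistingMap k A C R3)
    (c : C) (a : A) (b' : B) (w : A ⊗[k] B) :
    tsP k A B C R2 R3 (c ⊗ₜ[k] gSand k (mul' k A) (mul' k B) (a ⊗ₜ[k] (w ⊗ₜ[k] b')))
      = xiL k R2 R3 ((R3 (c ⊗ₜ[k] a) ⊗ₜ[k] w) ⊗ₜ[k] b') := by
  induction w using TensorProduct.induction_on with
  | zero => simp
  | tmul u v =>
      rw [gSand_tmul]
      simp only [mul'_apply]
      rw [tsP_tmul, twl k h3]
      generalize R3 (c ⊗ₜ[k] a) = z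
      induction z using TensorProduct.induction_on with
      | zero => simp
      | tmul a9 γ =>
          rw [gG_tmul, xiL_tmul, tlMap_tmul]
          generalize R3 (γ ⊗ₜ[k] u) = y
          induction y using TensorProduct.induction_on with
          | zero => simp
          | tmul a8 g8 =>
              simp only [coe_comp, Function.comp_apply, LinearEquiv.coe_coe, assoc_tmul,
                assoc_symm_tmul, lTensor_tmul, rTensor_tmul, mul'_apply]
              rw [tsPhi_tmul, twl k h2]
              simp [xiTail]
          | add y₁ y₂ ih₁ ih₂ =>
              simp only [tmul_add, add_tmul, map_add] at *
              rw [ih₁, ih₂]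
      | add z₁ z₂ ih₁ ih₂ =>
          simp only [tmul_add, add_tmul, map_add] at *
          rw [ih₁, ih₂]
  | add w₁ w₂ ih₁ ih₂ =>
      simp only [tmul_add, add_tmul, map_add] at *
      rw [ih₁, ih₂]

lemma xiLR
    (hb : lTensor A R2 ∘ₗ α k A C B ∘ₗ rTensor B R3 ∘ₗ α' k C A B ∘ₗ lTensor C R1
      = α k A B C ∘ₗ rTensor C R1 ∘ₗ α' k B A C ∘ₗ lTensor B R3 ∘ₗ α k B C A
        ∘ₗ rTensor A R2 ∘ₗ α' k C B A)
    (z : A ⊗[k] C) (b : B) (a' : A) (b'' : B) :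
    xiL k R2 R3 ((z ⊗ₜ[k] R1 (b ⊗ₜ[k] a')) ⊗ₜ[k] b'')
      = xiR k R1 R2 R3 ((z ⊗ₜ[k] (b ⊗ₜ[k] a')) ⊗ₜ[k] b'') := by
  induction z using TensorProduct.induction_on with
  | zero => simp
  | tmul a9 γ => rw [xiL_tmul, xiR_tmul, braid_tmul k R1 R2 R3 hb]
  | add z₁ z₂ ih₁ ih₂ =>
      simp only [tmul_add, add_tmul, map_add] at *
      rw [ih₁, ih₂]

lemma omgK1 (a9 : A) (b9 : B) (a8 : A) (v₂ : B ⊗[k] C) :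
    (rTensor C (twistMul k A B R1)) ((TensorProduct.assoc k (A ⊗[k] B) (A ⊗[k] B) C).symm
        ((a9 ⊗ₜ[k] b9) ⊗ₜ[k] (α' k A B C) (a8 ⊗ₜ[k] v₂)))
      = omg k (a9 ⊗ₜ[k] (R1 (b9 ⊗ₜ[k] a8) ⊗ₜ[k] v₂)) := by
  induction v₂ using TensorProduct.induction_on with
  | zero => simp
  | tmul b8 c7 =>
      simp only [coe_comp, Function.comp_apply, LinearEquiv.coe_coe, assoc_symm_tmul,
        rTensor_tmul, lTensor_tmul]
      rw [twistMul_tmul]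
      simp [omg]
  | add v₁ v₂ ih₁ ih₂ =>
      simp only [tmul_add, add_tmul, map_add] at *
      rw [ih₁, ih₂]

lemma omgK2 (a9 : A) (g8 : C) (b' : B) (r : A ⊗[k] B) :
    xiTail k R2 ((a9 ⊗ₜ[k] (TensorProduct.assoc k A B C) (r ⊗ₜ[k] g8)) ⊗ₜ[k] b')
      = omg k (a9 ⊗ₜ[k] (r ⊗ₜ[k] R2 (g8 ⊗ₜ[k] b'))) := by
  induction r using TensorProduct.induction_on with
  | zero => simp
  | tmul a7 b7 =>
      simp only [coe_comp, Function.comp_apply, LinearEquiv.coe_coe, assoc_tmul]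
      simp only [xiTail, coe_comp, Function.comp_apply, LinearEquiv.coe_coe,
        assoc_tmul, assoc_symm_tmul, lTensor_tmul, rTensor_tmul, mul'_apply]
      rw [gG_tmul]
      generalize R2 (g8 ⊗ₜ[k] b') = v₂
      induction v₂ using TensorProduct.induction_on with
      | zero => simp
      | tmul b8 c7 => simp [omg, gSand]
      | add v₁ v₂ ih₁ ih₂ =>
          simp only [tmul_add, add_tmul, map_add] at *
          rw [ih₁, ih₂]
  | add r₁ r₂ ih₁ ih₂ =>
      simp only [tmul_add, add_tmul, map_add] at *
      rw [ih₁, ih₂]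

lemma mlRy (a9 : A) (b9 : B) (b' : B) (y : A ⊗[k] C) :
    (rTensor C (twistMul k A B R1)) ((TensorProduct.assoc k (A ⊗[k] B) (A ⊗[k] B) C).symm
        ((a9 ⊗ₜ[k] b9) ⊗ₜ[k] tsPhi k R2 (y ⊗ₜ[k] b')))
      = xiTail k R2 ((a9 ⊗ₜ[k] trTail2 k R1 (b9 ⊗ₜ[k] y)) ⊗ₜ[k] b') := by
  induction y using TensorProduct.induction_on with
  | zero => simp
  | tmul a8 g8 =>
      rw [tsPhi_tmul, omgK1 k R1, trTail2_tmul, omgK2 k R2]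
  | add y₁ y₂ ih₁ ih₂ =>
      simp only [tmul_add, add_tmul, map_add] at *
      rw [ih₁, ih₂]

lemma mlR (a' : A) (b : B) (b' : B) (z : A ⊗[k] C) :
    (rTensor C (twistMul k A B R1)) ((TensorProduct.assoc k (A ⊗[k] B) (A ⊗[k] B) C).symm
        ((lTensor (A ⊗[k] B) (tsP k A B C R2 R3)) ((TensorProduct.assoc k (A ⊗[k] B) C (A ⊗[k] B))
          (tsPhi k R2 (z ⊗ₜ[k] b) ⊗ₜ[k] (a' ⊗ₜ[k] b')))))
      = xiR k R1 R2 R3 ((z ⊗ₜ[k] (b ⊗ₜ[k] a')) ⊗ₜ[k] b') := by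
  induction z using TensorProduct.induction_on with
  | zero => simp
  | tmul a9 γ =>
      rw [tsPhi_tmul, xiR_tmul, trMap_tmul]
      generalize R2 (γ ⊗ₜ[k] b) = v
      induction v using TensorProduct.induction_on with
      | zero => simp
      | tmul b9 g7 =>
          simp only [coe_comp, Function.comp_apply, LinearEquiv.coe_coe, assoc_tmul,
            assoc_symm_tmul, lTensor_tmul, rTensor_tmul]
          rw [tsP_tmul, trTail_tmul, mlRy k R1 R2]
      | add v₁ v₂ ih₁ ih₂ =>
          simp only [tmul_add, add_tmul, map_add] at *
          rw [ih₁, ih₂]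
  | add z₁ z₂ ih₁ ih₂ =>
      simp only [tmul_add, add_tmul, map_add] at *
      rw [ih₁, ih₂]

lemma tsP_mul_left (h1 : IsTwistingMap k A B R1) (h2 : IsTwistingMap k B C R2)
    (h3 : IsTwistingMap k A C R3)
    (hb : lTensor A R2 ∘ₗ α k A C B ∘ₗ rTensor B R3 ∘ₗ α' k C A B ∘ₗ lTensor C R1
      = α k A B C ∘ₗ rTensor C R1 ∘ₗ α' k B A C ∘ₗ lTensor B R3 ∘ₗ α k B C A
        ∘ₗ rTensor A R2 ∘ₗ α' k C B A) :
    tsP k A B C R2 R3 ∘ₗ lTensor C (twistMul k A B R1)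
        ∘ₗ α k C (A ⊗[k] B) (A ⊗[k] B)
      = rTensor C (twistMul k A B R1) ∘ₗ α' k (A ⊗[k] B) (A ⊗[k] B) C
        ∘ₗ lTensor (A ⊗[k] B) (tsP k A B C R2 R3) ∘ₗ α k (A ⊗[k] B) C (A ⊗[k] B)
        ∘ₗ rTensor (A ⊗[k] B) (tsP k A B C R2 R3) := by
  apply TensorProduct.ext'
  intro t x₂
  induction t using TensorProduct.induction_on with
  | zero => simp [zero_tmul]
  | tmul c x₁ =>
      induction x₁ using TensorProduct.induction_on with
      | zero => simp
      | tmul a b =>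
          induction x₂ using TensorProduct.induction_on with
          | zero => simp
          | tmul a' b' =>
              simp only [coe_comp, Function.comp_apply, LinearEquiv.coe_coe, assoc_tmul,
                lTensor_tmul, rTensor_tmul]
              rw [twistMul_tmul, mlL k R2 R3 h2 h3, xiLR k R1 R2 R3 hb, tsP_tmul,
                mlR k R1 R2 R3]
          | add u₁ u₂ ih₁ ih₂ =>
              simp only [tmul_add, add_tmul, map_add] at *
              rw [ih₁, ih₂]
      | add u₁ u₂ ih₁ ih₂ =>
          simp only [tmul_add, add_tmul, map_add] at *
          rw [ih₁, ih₂]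
  | add t₁ t₂ ih₁ ih₂ =>
      simp only [tmul_add, add_tmul, map_add] at *
      rw [ih₁, ih₂]

lemma tsP_isGT (h1 : IsTwistingMap k A B R1) (h2 : IsTwistingMap k B C R2)
    (h3 : IsTwistingMap k A C R3)
    (hb : lTensor A R2 ∘ₗ α k A C B ∘ₗ rTensor B R3 ∘ₗ α' k C A B ∘ₗ lTensor C R1
      = α k A B C ∘ₗ rTensor C R1 ∘ₗ α' k B A C ∘ₗ lTensor B R3 ∘ₗ α k B C A
        ∘ₗ rTensor A R2 ∘ₗ α' k C B A) :
    IsGT k (twistMul k A B R1) ((1 : A) ⊗ₜ[k] (1 : B)) (mul' k C) (1 : C)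
      (tsP k A B C R2 R3) := by
  refine ⟨?_, ?_, tsP_mul_left k R1 R2 R3 h1 h2 h3 hb, tsP_mul_right k R2 R3 h2 h3⟩
  · intro x
    induction x using TensorProduct.induction_on with
    | zero => simp
    | tmul a b => rw [tsP_tmul, h3.unit_left, tsPhi_tmul, h2.unit_left]; simp
    | add x₁ x₂ ih₁ ih₂ => simp only [tmul_add, map_add, ih₁, ih₂, add_tmul]
  · intro c
    rw [tsP_tmul, h3.unit_right, tsPhi_tmul, h2.unit_right]
    simp


end TsPAux



section EAux
set_option maxHeartbeats 4000000
variable {A B C : Type*} [Ring A] [Algebra k A] [Ring B] [Algebra k B] [Ring C] [Algebra k C]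
variable (R1 : B ⊗[k] A →ₗ[k] A ⊗[k] B) (R2 : C ⊗[k] B →ₗ[k] B ⊗[k] C)
  (R3 : C ⊗[k] A →ₗ[k] A ⊗[k] C)

lemma iterMul_eq :
    iterMul k A B C R1 R2 R3
      = gMul k (twistMul k A B R1) (mul' k C) (tsP k A B C R2 R3) := by
  apply TensorProduct.ext'
  intro s t
  induction s using TensorProduct.induction_on with
  | zero => simp [zero_tmul]
  | tmul x c =>
      induction t using TensorProduct.induction_on with
      | zero => simp
      | tmul x' c' =>
          rw [gMul_tmul]
          simp only [iterMul, coe_comp, Function.comp_apply, LinearEquiv.coe_coe,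
            assoc_tmul, assoc_symm_tmul, lTensor_tmul, rTensor_tmul]
          generalize tsP k A B C R2 R3 (c ⊗ₜ[k] x') = p
          induction p using TensorProduct.induction_on with
          | zero => simp
          | tmul x₂ c₂ =>
              simp only [coe_comp, Function.comp_apply, LinearEquiv.coe_coe,
                assoc_tmul, assoc_symm_tmul, lTensor_tmul, rTensor_tmul]
              rw [gSand_tmul]
          | add p₁ p₂ ih₁ ih₂ =>
              simp only [tmul_add, add_tmul, map_add] at *
              rw [ih₁, ih₂]
      | add t₁ t₂ ih₁ ih₂ =>
          simp only [tmul_add, add_tmul, map_add] at *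
          rw [ih₁, ih₂]
  | add s₁ s₂ ih₁ ih₂ =>
      simp only [tmul_add, add_tmul, map_add] at *
      rw [ih₁, ih₂]

variable (E : B ⊗[k] B →ₗ[k] (A ⊗[k] B) ⊗[k] C)

lemma tsNu_eq (hE : ∀ b b' : B, E (b ⊗ₜ[k] b') = ((1 : A) ⊗ₜ[k] (b * b')) ⊗ₜ[k] (1 : C)) :
    tsNu k A B C R1 E
      = (TensorProduct.mk k (A ⊗[k] B) C).flip 1 ∘ₗ twistMul k A B R1 := by
  apply TensorProduct.ext'
  intro s t
  induction s using TensorProduct.induction_on with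
  | zero => simp [zero_tmul]
  | tmul a b =>
      induction t using TensorProduct.induction_on with
      | zero => simp
      | tmul a' b' =>
          simp only [coe_comp, Function.comp_apply, LinearEquiv.coe_coe,
            TensorProduct.mk_apply, flip_apply]
          rw [twistMul_tmul]
          simp only [tsNu, coe_comp, Function.comp_apply, LinearEquiv.coe_coe,
            assoc_tmul, assoc_symm_tmul, lTensor_tmul, rTensor_tmul]
          generalize R1 (b ⊗ₜ[k] a') = r
          induction r using TensorProduct.induction_on with
          | zero => simp [gSand]
          | tmul u v =>
              simp only [coe_comp, Function.comp_apply, LinearEquiv.coe_coe,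
                assoc_tmul, assoc_symm_tmul, lTensor_tmul, rTensor_tmul, hE]
              rw [gSand_tmul]
              simp [mulAV, mul_one]
          | add r₁ r₂ ih₁ ih₂ =>
              simp only [tmul_add, add_tmul, map_add] at *
              rw [ih₁, ih₂]
      | add t₁ t₂ ih₁ ih₂ =>
          simp only [tmul_add, add_tmul, map_add] at *
          rw [ih₁, ih₂]
  | add s₁ s₂ ih₁ ih₂ =>
      simp only [tmul_add, add_tmul, map_add] at *
      rw [ih₁, ih₂]

lemma tsMul_eq (hE : ∀ b b' : B, E (b ⊗ₜ[k] b') = ((1 : A) ⊗ₜ[k] (b * b')) ⊗ₜ[k] (1 : C)) :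
    tsMul k A B C R1 R2 R3 E = iterMul k A B C R1 R2 R3 := by
  have A1 : (lTensor (A ⊗[k] B) (mul' k C) ∘ₗ α k (A ⊗[k] B) C C
        ∘ₗ rTensor C (tsNu k A B C R1 E) ∘ₗ α' k (A ⊗[k] B) (A ⊗[k] B) C)
      = rTensor C (twistMul k A B R1) ∘ₗ α' k (A ⊗[k] B) (A ⊗[k] B) C := by
    apply TensorProduct.ext'
    intro x t
    induction t using TensorProduct.induction_on with
    | zero => simp
    | tmul x' c =>
        simp only [coe_comp, Function.comp_apply, LinearEquiv.coe_coe, assoc_symm_tmul,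
          rTensor_tmul]
        rw [tsNu_eq k R1 E hE]
        simp only [coe_comp, Function.comp_apply, LinearEquiv.coe_coe,
          TensorProduct.mk_apply, flip_apply, assoc_tmul, lTensor_tmul, mul'_apply,
          one_mul]
    | add t₁ t₂ ih₁ ih₂ =>
        simp only [tmul_add, map_add] at *
        rw [ih₁, ih₂]
  calc tsMul k A B C R1 R2 R3 E
      = (lTensor (A ⊗[k] B) (mul' k C) ∘ₗ α k (A ⊗[k] B) C C
          ∘ₗ rTensor C (tsNu k A B C R1 E) ∘ₗ α' k (A ⊗[k] B) (A ⊗[k] B) C)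
        ∘ₗ lTensor (A ⊗[k] B) (lTensor (A ⊗[k] B) (mul' k C))
        ∘ₗ lTensor (A ⊗[k] B) (α k (A ⊗[k] B) C C)
        ∘ₗ lTensor (A ⊗[k] B) (rTensor C (tsP k A B C R2 R3))
        ∘ₗ lTensor (A ⊗[k] B) (α' k C (A ⊗[k] B) C)
        ∘ₗ α k (A ⊗[k] B) C ((A ⊗[k] B) ⊗[k] C) := rfl
    _ = (rTensor C (twistMul k A B R1) ∘ₗ α' k (A ⊗[k] B) (A ⊗[k] B) C)
        ∘ₗ lTensor (A ⊗[k] B) (lTensor (A ⊗[k] B) (mul' k C))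
        ∘ₗ lTensor (A ⊗[k] B) (α k (A ⊗[k] B) C C)
        ∘ₗ lTensor (A ⊗[k] B) (rTensor C (tsP k A B C R2 R3))
        ∘ₗ lTensor (A ⊗[k] B) (α' k C (A ⊗[k] B) C)
        ∘ₗ α k (A ⊗[k] B) C ((A ⊗[k] B) ⊗[k] C) := by rw [A1]
    _ = iterMul k A B C R1 R2 R3 := rfl

lemma eq4lem (h1 : IsTwistingMap k A B R1) (h3 : IsTwistingMap k A C R3)
    (hE : ∀ b b' : B, E (b ⊗ₜ[k] b') = ((1 : A) ⊗ₜ[k] (b * b')) ⊗ₜ[k] (1 : C)) :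
    rTensor C (mulAV k A B) ∘ₗ α' k A (A ⊗[k] B) C ∘ₗ lTensor A E ∘ₗ α k A B B
        ∘ₗ rTensor B R1 ∘ₗ α' k B A B ∘ₗ lTensor B R1 ∘ₗ α k B B A
      = rTensor C (mulAV k A B) ∘ₗ rTensor C (lTensor A R1) ∘ₗ rTensor C (α k A B A)
        ∘ₗ α' k (A ⊗[k] B) A C ∘ₗ lTensor (A ⊗[k] B) R3 ∘ₗ α k (A ⊗[k] B) C A
        ∘ₗ rTensor A E := by
  apply TensorProduct.ext'
  intro t a
  induction t using TensorProduct.induction_on with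
  | zero => simp [zero_tmul]
  | tmul b b' =>
      simp only [coe_comp, Function.comp_apply, LinearEquiv.coe_coe,
        assoc_tmul, assoc_symm_tmul, lTensor_tmul, rTensor_tmul]
      rw [hE]
      simp only [coe_comp, Function.comp_apply, LinearEquiv.coe_coe,
        assoc_tmul, assoc_symm_tmul, lTensor_tmul, rTensor_tmul]
      rw [h3.unit_left]
      simp only [coe_comp, Function.comp_apply, LinearEquiv.coe_coe,
        assoc_tmul, assoc_symm_tmul, lTensor_tmul, rTensor_tmul]
      rw [twr k h1]
      generalize R1 (b' ⊗ₜ[k] a) = r'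
      induction r' using TensorProduct.induction_on with
      | zero => simp
      | tmul u v =>
          simp only [coe_comp, Function.comp_apply, LinearEquiv.coe_coe,
            assoc_tmul, assoc_symm_tmul, lTensor_tmul, rTensor_tmul]
          rw [gH_tmul]
          generalize R1 (b ⊗ₜ[k] u) = w
          induction w using TensorProduct.induction_on with
          | zero => simp
          | tmul s t' =>
              simp only [coe_comp, Function.comp_apply, LinearEquiv.coe_coe,
                assoc_tmul, assoc_symm_tmul, lTensor_tmul, rTensor_tmul, mul'_apply, hE]
              simp [mulAV, mul_one, one_mul]
          | add w₁ w₂ ih₁ ih₂ =>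
              simp only [tmul_add, add_tmul, map_add] at *
              rw [ih₁, ih₂]
      | add r₁ r₂ ih₁ ih₂ =>
          simp only [tmul_add, add_tmul, map_add] at *
          rw [ih₁, ih₂]
  | add t₁ t₂ ih₁ ih₂ =>
      simp only [tmul_add, add_tmul, map_add] at *
      rw [ih₁, ih₂]

lemma eq5lem (h2 : IsTwistingMap k B C R2) (h3 : IsTwistingMap k A C R3)
    (hE : ∀ b b' : B, E (b ⊗ₜ[k] b') = ((1 : A) ⊗ₜ[k] (b * b')) ⊗ₜ[k] (1 : C)) :
    mulXC k (A ⊗[k] B) C ∘ₗ rTensor C E ∘ₗ α' k B B C ∘ₗ lTensor B R2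
        ∘ₗ α k B C B ∘ₗ rTensor B R2
      = mulXC k (A ⊗[k] B) C ∘ₗ rTensor C (α' k A B C) ∘ₗ rTensor C (lTensor A R2)
        ∘ₗ rTensor C (α k A C B) ∘ₗ rTensor C (rTensor B R3) ∘ₗ rTensor C (α' k C A B)
        ∘ₗ α' k C (A ⊗[k] B) C ∘ₗ lTensor C E ∘ₗ α k C B B := by
  apply TensorProduct.ext'
  intro t b'
  induction t using TensorProduct.induction_on with
  | zero => simp [zero_tmul]
  | tmul c b =>
      simp only [coe_comp, Function.comp_apply, LinearEquiv.coe_coe,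
        assoc_tmul, assoc_symm_tmul, lTensor_tmul, rTensor_tmul]
      rw [hE]
      simp only [coe_comp, Function.comp_apply, LinearEquiv.coe_coe,
        assoc_tmul, assoc_symm_tmul, lTensor_tmul, rTensor_tmul]
      rw [h3.unit_right]
      simp only [coe_comp, Function.comp_apply, LinearEquiv.coe_coe,
        assoc_tmul, assoc_symm_tmul, lTensor_tmul, rTensor_tmul]
      rw [twl k h2]
      generalize R2 (c ⊗ₜ[k] b) = v
      induction v using TensorProduct.induction_on with
      | zero => simp
      | tmul b9 γ =>
          simp only [coe_comp, Function.comp_apply, LinearEquiv.coe_coe,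
            assoc_tmul, assoc_symm_tmul, lTensor_tmul, rTensor_tmul]
          rw [gG_tmul]
          generalize R2 (γ ⊗ₜ[k] b') = v'
          induction v' using TensorProduct.induction_on with
          | zero => simp
          | tmul b8 c7 =>
              simp only [coe_comp, Function.comp_apply, LinearEquiv.coe_coe,
                assoc_tmul, assoc_symm_tmul, lTensor_tmul, rTensor_tmul, mul'_apply, hE]
              simp [mulXC, mul_one, one_mul]
          | add v₁ v₂ ih₁ ih₂ =>
              simp only [tmul_add, add_tmul, map_add] at *
              rw [ih₁, ih₂]
      | add v₁ v₂ ih₁ ih₂ =>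
          simp only [tmul_add, add_tmul, map_add] at *
          rw [ih₁, ih₂]
  | add t₁ t₂ ih₁ ih₂ =>
      simp only [tmul_add, add_tmul, map_add] at *
      rw [ih₁, ih₂]

lemma eq6lem (h1 : IsTwistingMap k A B R1) (h2 : IsTwistingMap k B C R2)
    (hE : ∀ b b' : B, E (b ⊗ₜ[k] b') = ((1 : A) ⊗ₜ[k] (b * b')) ⊗ₜ[k] (1 : C)) :
    tsTail k A B C ∘ₗ rTensor C (lTensor A E) ∘ₗ rTensor C (α k A B B)
        ∘ₗ rTensor C (rTensor B R1) ∘ₗ rTensor C (α' k B A B)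
        ∘ₗ α' k B (A ⊗[k] B) C ∘ₗ lTensor B E ∘ₗ α k B B B
      = tsTail k A B C ∘ₗ rTensor C (lTensor A E) ∘ₗ rTensor C (α k A B B)
        ∘ₗ α' k (A ⊗[k] B) B C ∘ₗ lTensor (A ⊗[k] B) R2 ∘ₗ α k (A ⊗[k] B) C B
        ∘ₗ rTensor B E := by
  apply TensorProduct.ext'
  intro t b''
  induction t using TensorProduct.induction_on with
  | zero => simp [zero_tmul]
  | tmul b b' =>
      simp only [coe_comp, Function.comp_apply, LinearEquiv.coe_coe,
        assoc_tmul, assoc_symm_tmul, lTensor_tmul, rTensor_tmul, hE]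
      rw [h1.unit_right, h2.unit_left]
      simp only [coe_comp, Function.comp_apply, LinearEquiv.coe_coe,
        assoc_tmul, assoc_symm_tmul, lTensor_tmul, rTensor_tmul, hE]
      simp [tsTail, mulAV, mulXC, mul_assoc, one_mul, mul_one]
  | add t₁ t₂ ih₁ ih₂ =>
      simp only [tmul_add, add_tmul, map_add] at *
      rw [ih₁, ih₂]

end EAux


/-- three twisting maps satisfying the braid equation give two-sided
crossed product data with `E(b ⊗ b') = 1_A ⊗ bb' ⊗ 1_C`, whose two-sided crossed
product multiplication is the iterated twisted tensor product multiplication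
`(a ⊗ b ⊗ c)(a' ⊗ b' ⊗ c') = a (a'_{R3})_{R1} ⊗ b_{R1} b'_{R2} ⊗ (c_{R3})_{R2} c'`;
in particular the latter is associative with unit `1_A ⊗ 1_B ⊗ 1_C`. -/
theorem iterated_twisted_tensor_product_is_two_sided_crossed_product
    (A B C : Type*) [Ring A] [Algebra k A] [Ring B] [Algebra k B] [Ring C] [Algebra k C]
    (R1 : B ⊗[k] A →ₗ[k] A ⊗[k] B) (R2 : C ⊗[k] B →ₗ[k] B ⊗[k] C)
    (R3 : C ⊗[k] A →ₗ[k] A ⊗[k] C)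
    (h1 : IsTwistingMap k A B R1) (h2 : IsTwistingMap k B C R2)
    (h3 : IsTwistingMap k A C R3)
    (hbraid : lTensor A R2 ∘ₗ α k A C B ∘ₗ rTensor B R3 ∘ₗ α' k C A B ∘ₗ lTensor C R1
      = α k A B C ∘ₗ rTensor C R1 ∘ₗ α' k B A C ∘ₗ lTensor B R3 ∘ₗ α k B C A
        ∘ₗ rTensor A R2 ∘ₗ α' k C B A) :
    IsTwoSidedData k A B C 1 R1 R2 R3
        ((TensorProduct.mk k (A ⊗[k] B) C).flip 1 ∘ₗ TensorProduct.mk k A B 1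
          ∘ₗ mul' k B) ∧
    tsMul k A B C R1 R2 R3
        ((TensorProduct.mk k (A ⊗[k] B) C).flip 1 ∘ₗ TensorProduct.mk k A B 1
          ∘ₗ mul' k B)
      = iterMul k A B C R1 R2 R3 ∧
    (∀ x, iterMul k A B C R1 R2 R3
        ((((1 : A) ⊗ₜ[k] (1 : B)) ⊗ₜ[k] (1 : C)) ⊗ₜ[k] x) = x) ∧
    (∀ x, iterMul k A B C R1 R2 R3
        (x ⊗ₜ[k] (((1 : A) ⊗ₜ[k] (1 : B)) ⊗ₜ[k] (1 : C))) = x) ∧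
    (∀ x y z, iterMul k A B C R1 R2 R3 (iterMul k A B C R1 R2 R3 (x ⊗ₜ[k] y) ⊗ₜ[k] z)
        = iterMul k A B C R1 R2 R3 (x ⊗ₜ[k] iterMul k A B C R1 R2 R3 (y ⊗ₜ[k] z))) := by
  set E : B ⊗[k] B →ₗ[k] (A ⊗[k] B) ⊗[k] C :=
    (TensorProduct.mk k (A ⊗[k] B) C).flip 1 ∘ₗ TensorProduct.mk k A B 1 ∘ₗ mul' k B with hEdef
  have hE : ∀ b b' : B, E (b ⊗ₜ[k] b') = ((1 : A) ⊗ₜ[k] (b * b')) ⊗ₜ[k] (1 : C) := by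
    intro b b'
    simp [hEdef, TensorProduct.mk_apply]
  have hM : IsMon k (twistMul k A B R1) ((1 : A) ⊗ₜ[k] (1 : B)) := by
    rw [twistMul_eq]
    exact gMul_isMon k (mul'_isMon k) (mul'_isMon k) (IsTwistingMap.toGT k h1)
  have hGT := tsP_isGT k R1 R2 R3 h1 h2 h3 hbraid
  have hMon : IsMon k (gMul k (twistMul k A B R1) (mul' k C) (tsP k A B C R2 R3))
      (((1 : A) ⊗ₜ[k] (1 : B)) ⊗ₜ[k] (1 : C)) :=
    gMul_isMon k hM (mul'_isMon k) hGT
  refine ⟨⟨h3, h1.unit_left, h1.unit_right, h2.unit_right, h2.unit_left, ?_, ?_,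
      h1.mul_left, h2.mul_right, hbraid, eq4lem k R1 R3 E h1 h3 hE,
      eq5lem k R2 R3 E h2 h3 hE, eq6lem k R1 R2 E h1 h2 hE⟩,
    tsMul_eq k R1 R2 R3 E hE, ?_, ?_, ?_⟩
  · intro v; rw [hE]; simp
  · intro v; rw [hE]; simp
  · intro x
    rw [iterMul_eq k R1 R2 R3]
    exact hMon.one_mul x
  · intro x
    rw [iterMul_eq k R1 R2 R3]
    exact hMon.mul_one x
  · intro x y z
    rw [iterMul_eq k R1 R2 R3]
    exact hMon.assoc x y z
end TwoSidedCP
end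
end

section
/- Let (A, V, C, R1, R2, R3, E) be two-sided crossed product data over a field k, and assume R3 is the flip map, R3(c⊗a) = a⊗c for all a∈A, c∈C. Transfer the algebra structure of the two-sided crossed product A ⋊ V ⋉ C to V⊗(A⊗C) via the canonical linear isomorphism A⊗V⊗C ≅ V⊗A⊗C, obtaining a multiplication •. Then for all a,a'∈A, v∈V, c,c'∈C one has (v⊗(a⊗c))•(1_V⊗(a'⊗c')) = v_{R1}⊗(a a'_{R1}⊗cc'), and in full generality (v⊗(a⊗c))•(v'⊗(a'⊗c')) = E_V(v_{R1}, v'_{R2}) ⊗ (a a'_{R1} E_A(v_{R1}, v'_{R2}) ⊗ E_C(v_{R1}, v'_{R2}) c_{R2} c'). -/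
open TensorProduct LinearMap

set_option maxHeartbeats 1000000
set_option synthInstance.maxHeartbeats 400000

noncomputable section

namespace TwoSidedCP

variable (k : Type*) [Field k]

section Statement16
variable (A V C : Type*) [Ring A] [Algebra k A] [AddCommGroup V] [Module k V]
  [Ring C] [Algebra k C]

/-- Auxiliary part of the L-R-type multiplication on `V ⊗ (A ⊗ C)`:
`((v ⊗ c) ⊗ (v' ⊗ (a' ⊗ c'))) ↦ (a'_{R1} E_A(v_{R1}, v'_{R2}) ⊗ E_V(v_{R1}, v'_{R2}))
⊗ E_C(v_{R1}, v'_{R2}) c_{R2} c'`. -/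
def lrInner (R1 : V ⊗[k] A →ₗ[k] A ⊗[k] V) (R2 : C ⊗[k] V →ₗ[k] V ⊗[k] C)
    (E : V ⊗[k] V →ₗ[k] (A ⊗[k] V) ⊗[k] C) :
    (V ⊗[k] C) ⊗[k] (V ⊗[k] (A ⊗[k] C)) →ₗ[k] (A ⊗[k] V) ⊗[k] C :=
  mulXC k (A ⊗[k] V) C ∘ₗ rTensor C (rTensor C (mulAV k A V))
    ∘ₗ rTensor C (α' k A (A ⊗[k] V) C) ∘ₗ rTensor C (lTensor A E)
    ∘ₗ rTensor C (α k A V V) ∘ₗ α' k (A ⊗[k] V) V C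
    ∘ₗ lTensor (A ⊗[k] V) (mulXC k V C) ∘ₗ lTensor (A ⊗[k] V) (rTensor C R2)
    ∘ₗ lTensor (A ⊗[k] V) (α' k C V C) ∘ₗ α k (A ⊗[k] V) C (V ⊗[k] C)
    ∘ₗ rTensor (V ⊗[k] C) (rTensor C R1 ∘ₗ α' k V A C
        ∘ₗ lTensor V (TensorProduct.comm k C A).toLinearMap ∘ₗ α k V C A)
    ∘ₗ α' k (V ⊗[k] C) A (V ⊗[k] C) ∘ₗ lTensor (V ⊗[k] C) (α k A V C)
    ∘ₗ lTensor (V ⊗[k] C) (rTensor C (TensorProduct.comm k V A).toLinearMap)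
    ∘ₗ lTensor (V ⊗[k] C) (α' k V A C)

/-- The L-R-type multiplication on `V ⊗ (A ⊗ C)`:
`(v ⊗ (a ⊗ c)) • (v' ⊗ (a' ⊗ c')) = E_V(v_{R1}, v'_{R2}) ⊗
(a a'_{R1} E_A(v_{R1}, v'_{R2}) ⊗ E_C(v_{R1}, v'_{R2}) c_{R2} c')`. -/
def lrMul (R1 : V ⊗[k] A →ₗ[k] A ⊗[k] V) (R2 : C ⊗[k] V →ₗ[k] V ⊗[k] C)
    (E : V ⊗[k] V →ₗ[k] (A ⊗[k] V) ⊗[k] C) :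
    (V ⊗[k] (A ⊗[k] C)) ⊗[k] (V ⊗[k] (A ⊗[k] C)) →ₗ[k] V ⊗[k] (A ⊗[k] C) :=
  α k V A C ∘ₗ rTensor C (TensorProduct.comm k A V).toLinearMap
    ∘ₗ rTensor C (mulAV k A V) ∘ₗ α' k A (A ⊗[k] V) C
    ∘ₗ lTensor A (lrInner k A V C R1 R2 E)
    ∘ₗ α k A (V ⊗[k] C) (V ⊗[k] (A ⊗[k] C))
    ∘ₗ rTensor (V ⊗[k] (A ⊗[k] C)) (α k A V C)
    ∘ₗ rTensor (V ⊗[k] (A ⊗[k] C)) (rTensor C (TensorProduct.comm k V A).toLinearMap)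
    ∘ₗ rTensor (V ⊗[k] (A ⊗[k] C)) (α' k V A C)

/-- if `R3` is the flip map, then the multiplication `•` obtained by
transferring the two-sided crossed product structure to `V ⊗ (A ⊗ C)` along the
canonical isomorphism satisfies
`(v ⊗ (a ⊗ c)) • (1_V ⊗ (a' ⊗ c')) = v_{R1} ⊗ (a a'_{R1} ⊗ cc')` and, in full
generality, `(v ⊗ (a ⊗ c)) • (v' ⊗ (a' ⊗ c')) = E_V(v_{R1}, v'_{R2}) ⊗
(a a'_{R1} E_A(v_{R1}, v'_{R2}) ⊗ E_C(v_{R1}, v'_{R2}) c_{R2} c')`. -/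
theorem flip_R3_gives_LR_crossed_product_multiplication (e : V) (he : e ≠ 0)
    (R1 : V ⊗[k] A →ₗ[k] A ⊗[k] V) (R2 : C ⊗[k] V →ₗ[k] V ⊗[k] C)
    (R3 : C ⊗[k] A →ₗ[k] A ⊗[k] C) (E : V ⊗[k] V →ₗ[k] (A ⊗[k] V) ⊗[k] C)
    (h : IsTwoSidedData k A V C e R1 R2 R3 E)
    (hR3 : ∀ (c : C) (a : A), R3 (c ⊗ₜ[k] a) = a ⊗ₜ[k] c) :
    (∀ (v : V) (a : A) (c : C) (a' : A) (c' : C),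
      ((phiVAC k A V C).toLinearMap ∘ₗ tsMul k A V C R1 R2 R3 E
          ∘ₗ TensorProduct.map (phiVAC k A V C).symm.toLinearMap
              (phiVAC k A V C).symm.toLinearMap)
          ((v ⊗ₜ[k] (a ⊗ₜ[k] c)) ⊗ₜ[k] (e ⊗ₜ[k] (a' ⊗ₜ[k] c')))
        = (lTensor V ((TensorProduct.mk k A C).flip (c * c'))
            ∘ₗ lTensor V (mulLeft k a)
            ∘ₗ (TensorProduct.comm k A V).toLinearMap) (R1 (v ⊗ₜ[k] a'))) ∧
    (phiVAC k A V C).toLinearMap ∘ₗ tsMul k A V C R1 R2 R3 E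
        ∘ₗ TensorProduct.map (phiVAC k A V C).symm.toLinearMap
            (phiVAC k A V C).symm.toLinearMap
      = lrMul k A V C R1 R2 E := by
  have key : ∀ (v : V) (a : A) (c : C) (v' : V) (a' : A) (c' : C),
      ((phiVAC k A V C).toLinearMap ∘ₗ tsMul k A V C R1 R2 R3 E
          ∘ₗ TensorProduct.map (phiVAC k A V C).symm.toLinearMap (phiVAC k A V C).symm.toLinearMap)
          ((v ⊗ₜ[k] (a ⊗ₜ[k] c)) ⊗ₜ[k] (v' ⊗ₜ[k] (a' ⊗ₜ[k] c')))
        = lrMul k A V C R1 R2 E ((v ⊗ₜ[k] (a ⊗ₜ[k] c)) ⊗ₜ[k] (v' ⊗ₜ[k] (a' ⊗ₜ[k] c'))) := by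
    intro v a c v' a' c'
    simp only [tsMul, tsP, tsNu, lrMul, lrInner, mulAV, mulXC, phiVAC, α, α',
      LinearMap.comp_apply, LinearEquiv.coe_coe, LinearEquiv.trans_apply,
      LinearEquiv.trans_symm, LinearEquiv.symm_symm, TensorProduct.congr_symm_tmul,
      TensorProduct.congr_tmul, LinearEquiv.refl_apply, LinearEquiv.refl_symm,
      TensorProduct.comm_tmul, TensorProduct.comm_symm_tmul,
      TensorProduct.assoc_tmul, TensorProduct.assoc_symm_tmul, lTensor_tmul,
      rTensor_tmul, TensorProduct.map_tmul, mul'_apply, hR3]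
    generalize R2 (c ⊗ₜ[k] v') = x
    induction x using TensorProduct.induction_on with
    | zero => simp
    | add x₁ x₂ ih₁ ih₂ =>
      simp only [tmul_add, add_tmul, map_add]
      rw [ih₁, ih₂]
    | tmul v₂ c₂ =>
      simp only [LinearMap.comp_apply, LinearEquiv.coe_coe,
        TensorProduct.comm_tmul, TensorProduct.assoc_tmul, TensorProduct.assoc_symm_tmul,
        lTensor_tmul, rTensor_tmul, TensorProduct.map_tmul, mul'_apply]
      generalize R1 (v ⊗ₜ[k] a') = y
      induction y using TensorProduct.induction_on with
      | zero => simp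
      | add y₁ y₂ ih₁ ih₂ =>
        simp only [tmul_add, add_tmul, map_add]
        rw [ih₁, ih₂]
      | tmul a₁ v₁ =>
        simp only [LinearMap.comp_apply, LinearEquiv.coe_coe,
          TensorProduct.comm_tmul, TensorProduct.assoc_tmul, TensorProduct.assoc_symm_tmul,
          lTensor_tmul, rTensor_tmul, TensorProduct.map_tmul, mul'_apply]
        generalize E (v₁ ⊗ₜ[k] v₂) = z
        induction z using TensorProduct.induction_on with
        | zero => simp
        | add z₁ z₂ ih₁ ih₂ =>
          simp only [tmul_add, add_tmul, map_add]
          rw [ih₁, ih₂]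
        | tmul w c₃ =>
          induction w using TensorProduct.induction_on with
          | zero => simp
          | add w₁ w₂ ih₁ ih₂ =>
            simp only [tmul_add, add_tmul, map_add]
            rw [ih₁, ih₂]
          | tmul aE vE =>
            simp only [LinearMap.comp_apply, LinearEquiv.coe_coe,
              TensorProduct.comm_tmul, TensorProduct.assoc_tmul, TensorProduct.assoc_symm_tmul,
              lTensor_tmul, rTensor_tmul, TensorProduct.map_tmul, mul'_apply, mul_assoc,
              TensorProduct.congr_tmul, LinearEquiv.refl_apply]
  have hmap : (phiVAC k A V C).toLinearMap ∘ₗ tsMul k A V C R1 R2 R3 E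
        ∘ₗ TensorProduct.map (phiVAC k A V C).symm.toLinearMap
            (phiVAC k A V C).symm.toLinearMap
      = lrMul k A V C R1 R2 E := by
    apply TensorProduct.ext'
    intro x y
    induction x using TensorProduct.induction_on with
    | zero => simp
    | add x₁ x₂ ih₁ ih₂ => simp only [add_tmul, map_add, ih₁, ih₂]
    | tmul v ac =>
      induction ac using TensorProduct.induction_on with
      | zero => simp
      | add p q ih₁ ih₂ => simp only [tmul_add, add_tmul, map_add, ih₁, ih₂]
      | tmul a c =>
        induction y using TensorProduct.induction_on with
        | zero => simp
        | add y₁ y₂ ih₁ ih₂ => simp only [tmul_add, map_add, ih₁, ih₂]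
        | tmul v' ac' =>
          induction ac' using TensorProduct.induction_on with
          | zero => simp
          | add p q ih₁ ih₂ => simp only [tmul_add, map_add, ih₁, ih₂]
          | tmul a' c' => exact key v a c v' a' c'
  refine ⟨fun v a c a' c' => ?_, hmap⟩
  rw [key v a c e a' c']
  simp only [lrMul, lrInner, mulAV, mulXC, α, α',
    LinearMap.comp_apply, LinearEquiv.coe_coe,
    TensorProduct.comm_tmul, TensorProduct.assoc_tmul, TensorProduct.assoc_symm_tmul,
    lTensor_tmul, rTensor_tmul, TensorProduct.map_tmul, mul'_apply, h.r2a]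
  generalize R1 (v ⊗ₜ[k] a') = y
  induction y using TensorProduct.induction_on with
  | zero => simp
  | add y₁ y₂ ih₁ ih₂ =>
    simp only [tmul_add, add_tmul, map_add]
    rw [ih₁, ih₂]
  | tmul a₁ v₁ =>
    simp only [LinearMap.comp_apply, LinearEquiv.coe_coe,
      TensorProduct.comm_tmul, TensorProduct.assoc_tmul, TensorProduct.assoc_symm_tmul,
      lTensor_tmul, rTensor_tmul, TensorProduct.map_tmul, mul'_apply, h.eb,
      TensorProduct.mk_apply, LinearMap.flip_apply, LinearMap.mulLeft_apply,
      mul_one, one_mul, mul_assoc]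

end Statement16
end TwoSidedCP
end
end

section
/- Let (A, μ_A, 1_A) and (C, μ_C, 1_C) be associative unital algebras over a field k and V a k-vector space with a distinguished nonzero element 1_V. Suppose A⊗V⊗C carries an associative algebra structure (multiplication denoted ·) with unit 1_A⊗1_V⊗1_C such that a ↦ a⊗1_V⊗1_C and c ↦ 1_A⊗1_V⊗c are algebra maps, a⊗v⊗c = (a⊗1_V⊗1_C)·(1_A⊗v⊗1_C)·(1_A⊗1_V⊗c) for all a∈A, v∈V, c∈C, and products of the forms (1_A⊗v⊗1_C)·(a'⊗1_V⊗1_C), (1_A⊗1_V⊗c)·(1_A⊗v'⊗1_C), (1_A⊗1_V⊗c)·(a'⊗1_V⊗1_C) lie in A⊗V⊗1_C, 1_A⊗V⊗C, A⊗1_V⊗C respectively. Define R1: V⊗A → A⊗V, R2: C⊗V → V⊗C, R3: C⊗A → A⊗C, E: V⊗V → A⊗V⊗C by R1(v⊗a) = (1_A⊗v⊗1_C)·(a⊗1_V⊗1_C) (viewed in A⊗V), R2(c⊗v) = (1_A⊗1_V⊗c)·(1_A⊗v⊗1_C) (viewed in V⊗C), R3(c⊗a) = (1_A⊗1_V⊗c)·(a⊗1_V⊗1_C)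 (viewed in A⊗C), and E(v⊗v') = (1_A⊗v⊗1_C)·(1_A⊗v'⊗1_C). Then, writing R1(v⊗a) = a_{R1}⊗v_{R1} with copies r1 of R1, and E(v⊗v') = E_A(v,v')⊗E_V(v,v')⊗E_C(v,v'), and R3(c⊗a) = a_{R3}⊗c_{R3}, the relation (equiv4) holds: (a_{R1})_{r1} E_A(v_{r1}, v'_{R1}) ⊗ E_V(v_{r1}, v'_{R1}) ⊗ E_C(v_{r1}, v'_{R1}) = E_A(v,v')(a_{R3})_{R1} ⊗ E_V(v,v')_{R1} ⊗ E_C(v,v')_{R3} for all a∈A and v,v'∈V. -/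
open TensorProduct LinearMap

set_option maxHeartbeats 1000000
set_option synthInstance.maxHeartbeats 400000

noncomputable section

namespace TwoSidedCP

variable (k : Type*) [Field k]

section Aux
variable {k : Type*} [Field k]

lemma alpha_tmul (X Y Z : Type*) [AddCommGroup X] [Module k X] [AddCommGroup Y] [Module k Y]
    [AddCommGroup Z] [Module k Z] (x : X) (y : Y) (z : Z) :
    α k X Y Z ((x ⊗ₜ[k] y) ⊗ₜ[k] z) = x ⊗ₜ[k] (y ⊗ₜ[k] z) := rfl

lemma alpha'_tmul (X Y Z : Type*) [AddCommGroup X] [Module k X] [AddCommGroup Y] [Module k Y]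
    [AddCommGroup Z] [Module k Z] (x : X) (y : Y) (z : Z) :
    α' k X Y Z (x ⊗ₜ[k] (y ⊗ₜ[k] z)) = (x ⊗ₜ[k] y) ⊗ₜ[k] z :=
  (TensorProduct.assoc k X Y Z).symm_apply_apply ((x ⊗ₜ[k] y) ⊗ₜ[k] z)

lemma mulAV_tmul (A : Type*) [Ring A] [Algebra k A] (V : Type*) [AddCommGroup V] [Module k V]
    (a b : A) (v : V) :
    mulAV k A V (a ⊗ₜ[k] (b ⊗ₜ[k] v)) = (a * b) ⊗ₜ[k] v := by
  simp [mulAV, alpha'_tmul]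

end Aux

/-- given an algebra structure on `A ⊗ V ⊗ C` as in the converse theorem,
the maps `R1`, `R2`, `R3`, `E` defined from the multiplication (via the canonical
embeddings) satisfy the relation (equiv4):
`(a_{R1})_{r1} E_A(v_{r1}, v'_{R1}) ⊗ E_V(v_{r1}, v'_{R1}) ⊗ E_C(v_{r1}, v'_{R1})
= E_A(v, v') (a_{R3})_{R1} ⊗ E_V(v, v')_{R1} ⊗ E_C(v, v')_{R3}`. -/
theorem converse_construction_satisfies_equiv4
    (A V C : Type*) [Ring A] [Algebra k A] [AddCommGroup V] [Module k V]
    [Ring C] [Algebra k C] (e : V) (he : e ≠ 0)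
    (m : ((A ⊗[k] V) ⊗[k] C) ⊗[k] ((A ⊗[k] V) ⊗[k] C) →ₗ[k] (A ⊗[k] V) ⊗[k] C)
    (hul : ∀ x, m ((((1 : A) ⊗ₜ[k] e) ⊗ₜ[k] (1 : C)) ⊗ₜ[k] x) = x)
    (hur : ∀ x, m (x ⊗ₜ[k] (((1 : A) ⊗ₜ[k] e) ⊗ₜ[k] (1 : C))) = x)
    (hassoc : ∀ x y z, m (m (x ⊗ₜ[k] y) ⊗ₜ[k] z) = m (x ⊗ₜ[k] m (y ⊗ₜ[k] z)))
    (halgA : ∀ a a' : A,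
      m (((a ⊗ₜ[k] e) ⊗ₜ[k] (1 : C)) ⊗ₜ[k] ((a' ⊗ₜ[k] e) ⊗ₜ[k] (1 : C)))
        = ((a * a') ⊗ₜ[k] e) ⊗ₜ[k] (1 : C))
    (halgC : ∀ c c' : C,
      m ((((1 : A) ⊗ₜ[k] e) ⊗ₜ[k] c) ⊗ₜ[k] (((1 : A) ⊗ₜ[k] e) ⊗ₜ[k] c'))
        = ((1 : A) ⊗ₜ[k] e) ⊗ₜ[k] (c * c'))
    (hfact : ∀ (a : A) (v : V) (c : C),
      m (m (((a ⊗ₜ[k] e) ⊗ₜ[k] (1 : C)) ⊗ₜ[k] (((1 : A) ⊗ₜ[k] v) ⊗ₜ[k] (1 : C)))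
          ⊗ₜ[k] (((1 : A) ⊗ₜ[k] e) ⊗ₜ[k] c)) = (a ⊗ₜ[k] v) ⊗ₜ[k] c)
    (R1 : V ⊗[k] A →ₗ[k] A ⊗[k] V) (R2 : C ⊗[k] V →ₗ[k] V ⊗[k] C)
    (R3 : C ⊗[k] A →ₗ[k] A ⊗[k] C) (E : V ⊗[k] V →ₗ[k] (A ⊗[k] V) ⊗[k] C)
    (hR1 : ∀ (v : V) (a : A),
      R1 (v ⊗ₜ[k] a) ⊗ₜ[k] (1 : C)
        = m ((((1 : A) ⊗ₜ[k] v) ⊗ₜ[k] (1 : C)) ⊗ₜ[k] ((a ⊗ₜ[k] e) ⊗ₜ[k] (1 : C))))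
    (hR2 : ∀ (c : C) (v : V),
      rTensor C (TensorProduct.mk k A V (1 : A)) (R2 (c ⊗ₜ[k] v))
        = m ((((1 : A) ⊗ₜ[k] e) ⊗ₜ[k] c) ⊗ₜ[k] (((1 : A) ⊗ₜ[k] v) ⊗ₜ[k] (1 : C))))
    (hR3 : ∀ (c : C) (a : A),
      rTensor C ((TensorProduct.mk k A V).flip e) (R3 (c ⊗ₜ[k] a))
        = m ((((1 : A) ⊗ₜ[k] e) ⊗ₜ[k] c) ⊗ₜ[k] ((a ⊗ₜ[k] e) ⊗ₜ[k] (1 : C))))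
    (hE : ∀ (v v' : V),
      E (v ⊗ₜ[k] v')
        = m ((((1 : A) ⊗ₜ[k] v) ⊗ₜ[k] (1 : C)) ⊗ₜ[k] (((1 : A) ⊗ₜ[k] v') ⊗ₜ[k] (1 : C)))) :
    rTensor C (mulAV k A V) ∘ₗ α' k A (A ⊗[k] V) C ∘ₗ lTensor A E ∘ₗ α k A V V
        ∘ₗ rTensor V R1 ∘ₗ α' k V A V ∘ₗ lTensor V R1 ∘ₗ α k V V A
      = rTensor C (mulAV k A V) ∘ₗ rTensor C (lTensor A R1) ∘ₗ rTensor C (α k A V A)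
        ∘ₗ α' k (A ⊗[k] V) A C ∘ₗ lTensor (A ⊗[k] V) R3 ∘ₗ α k (A ⊗[k] V) C A
        ∘ₗ rTensor A E := by
  have hj : forall (b : A) (w : V),
      m (((b ⊗ₜ[k] e) ⊗ₜ[k] (1 : C)) ⊗ₜ[k] (((1 : A) ⊗ₜ[k] w) ⊗ₜ[k] (1 : C)))
        = (b ⊗ₜ[k] w) ⊗ₜ[k] (1 : C) := by
    intro b w
    have h := hfact b w 1
    rwa [hur] at h
  have hAe : forall (s : A) (t : C),
      m (((s ⊗ₜ[k] e) ⊗ₜ[k] (1 : C)) ⊗ₜ[k] (((1 : A) ⊗ₜ[k] e) ⊗ₜ[k] t))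
        = (s ⊗ₜ[k] e) ⊗ₜ[k] t := by
    intro s t
    have h := hfact s e t
    rwa [hur] at h
  have S1 : forall (b : A) (x : (A ⊗[k] V) ⊗[k] C),
      rTensor C (mulAV k A V) (α' k A (A ⊗[k] V) C (b ⊗ₜ[k] x))
        = m (((b ⊗ₜ[k] e) ⊗ₜ[k] (1 : C)) ⊗ₜ[k] x) := by
    intro b x
    induction x using TensorProduct.induction_on with
    | zero => simp
    | add y z hy hz => simp only [tmul_add, map_add, hy, hz]
    | tmul y r =>
      induction y using TensorProduct.induction_on with
      | zero => simp
      | add y1 y2 h1 h2 => simp only [add_tmul, tmul_add, map_add, h1, h2]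
      | tmul p q =>
        rw [alpha'_tmul, rTensor_tmul, mulAV_tmul,
          ← hfact p q r, ← hassoc, ← hassoc, halgA, hfact]
  have Hjr : forall (y : A ⊗[k] V) (r : C),
      m ((y ⊗ₜ[k] (1 : C)) ⊗ₜ[k] (((1 : A) ⊗ₜ[k] e) ⊗ₜ[k] r)) = y ⊗ₜ[k] r := by
    intro y r
    induction y using TensorProduct.induction_on with
    | zero => simp
    | add y1 y2 h1 h2 => simp only [add_tmul, map_add, h1, h2]
    | tmul p q => rw [← hj p q, hfact]
  have G4 : forall (p : A) (w : A ⊗[k] V) (t : C),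
      (mulAV k A V (p ⊗ₜ[k] w)) ⊗ₜ[k] t
        = m (m (((p ⊗ₜ[k] e) ⊗ₜ[k] (1 : C)) ⊗ₜ[k] (w ⊗ₜ[k] (1 : C)))
            ⊗ₜ[k] (((1 : A) ⊗ₜ[k] e) ⊗ₜ[k] t)) := by
    intro p w t
    induction w using TensorProduct.induction_on with
    | zero => simp
    | add w1 w2 h1 h2 => simp only [tmul_add, add_tmul, map_add, h1, h2]
    | tmul b u =>
      rw [mulAV_tmul, ← hj b u, ← hassoc, halgA, hj, ← hj, hfact]
  have G2 : forall (y : A ⊗[k] V) (z : A ⊗[k] C),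
      rTensor C (mulAV k A V) (rTensor C (lTensor A R1) (rTensor C (α k A V A)
        (α' k (A ⊗[k] V) A C (y ⊗ₜ[k] z))))
        = m ((y ⊗ₜ[k] (1 : C)) ⊗ₜ[k]
            (rTensor C ((TensorProduct.mk k A V).flip e) z)) := by
    intro y z
    induction z using TensorProduct.induction_on with
    | zero => simp
    | add z1 z2 h1 h2 => simp only [tmul_add, map_add, h1, h2]
    | tmul s t =>
      induction y using TensorProduct.induction_on with
      | zero => simp
      | add y1 y2 h1 h2 => simp only [add_tmul, tmul_add, map_add, h1, h2]
      | tmul p q =>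
        rw [alpha'_tmul, rTensor_tmul, alpha_tmul, rTensor_tmul, lTensor_tmul,
          rTensor_tmul, rTensor_tmul]
        simp only [flip_apply, TensorProduct.mk_apply]
        rw [G4, hR1, ← hj p q, ← hAe s t, ← hassoc, ← hassoc]
  have G : forall (x : (A ⊗[k] V) ⊗[k] C) (a : A),
      rTensor C (mulAV k A V) (rTensor C (lTensor A R1) (rTensor C (α k A V A)
        (α' k (A ⊗[k] V) A C (lTensor (A ⊗[k] V) R3 (α k (A ⊗[k] V) C A (x ⊗ₜ[k] a))))))
        = m (x ⊗ₜ[k] ((a ⊗ₜ[k] e) ⊗ₜ[k] (1 : C))) := by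
    intro x a
    induction x using TensorProduct.induction_on with
    | zero => simp
    | add x1 x2 h1 h2 => simp only [add_tmul, map_add, h1, h2]
    | tmul y r =>
      rw [alpha_tmul, lTensor_tmul, G2, hR3, ← hassoc, Hjr]
  have D2 : forall (y : A ⊗[k] V) (u : V),
      rTensor C (mulAV k A V) (α' k A (A ⊗[k] V) C (lTensor A E (α k A V V (y ⊗ₜ[k] u))))
        = m ((y ⊗ₜ[k] (1 : C)) ⊗ₜ[k] (((1 : A) ⊗ₜ[k] u) ⊗ₜ[k] (1 : C))) := by
    intro y u
    induction y using TensorProduct.induction_on with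
    | zero => simp
    | add y1 y2 h1 h2 => simp only [add_tmul, map_add, h1, h2]
    | tmul b w =>
      rw [alpha_tmul, lTensor_tmul, S1, hE, ← hassoc, hj]
  have D : forall (v : V) (x : A ⊗[k] V),
      rTensor C (mulAV k A V) (α' k A (A ⊗[k] V) C (lTensor A E (α k A V V
        (rTensor V R1 (α' k V A V (v ⊗ₜ[k] x))))))
        = m ((((1 : A) ⊗ₜ[k] v) ⊗ₜ[k] (1 : C)) ⊗ₜ[k] (x ⊗ₜ[k] (1 : C))) := by
    intro v x
    induction x using TensorProduct.induction_on with
    | zero => simp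
    | add x1 x2 h1 h2 => simp only [tmul_add, add_tmul, map_add, h1, h2]
    | tmul b u =>
      rw [alpha'_tmul, rTensor_tmul, D2, hR1, hassoc, hj]
  apply TensorProduct.ext_threefold
  intro v v' a
  simp only [coe_comp, Function.comp_apply]
  rw [alpha_tmul, lTensor_tmul, D, rTensor_tmul, G, hR1, hE, hassoc]
end TwoSidedCP
end
end
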